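/- arXiv:1506.08437 — 12 statements merged into one kernel-verified Lean document; each statement's English description precedes it below -/
import Mathlib

section
/- For every positive integer n, the identity ∑_{k=1}^n (-1)^k * C(n,k) * C(n+k,k) * (1/k) = -2 * H_n holds, where H_n = ∑_{j=1}^n 1/j is the n-th harmonic number. -/
/-!
Write `S n` for the left-hand side. Passing from `n` to `n + 1` changes the `k`-th term by
`2 / (n + 1) * (-1) ^ k * C(n + 1, k) * C(n + k, k)`, and these alternating terms have the
closed-form partial sums `(-1) ^ j * C(n, j) * C(n + 1 + j, j) - 1` (Gosper), which equal `-1`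
at `j = n + 1`. Hence `S (n + 1) - S n = -2 / (n + 1)`, and the identity follows by induction.
-/

open Finset

namespace Nat

theorem choose_mul_choose_add_succ_left (n k : ℕ) :
    (n + 1) * ((n + 1).choose k * (n + 1 + k).choose k) =
      (n + 1) * (n.choose k * (n + k).choose k) + 2 * k * ((n + 1).choose k * (n + k).choose k) := by
  rcases le_or_gt k (n + 1) with hk | hk
  · have h₁ : (n + k).choose k * (n + k + 1) = (n + 1 + k).choose k * (n + 1) := by
      rw [choose_mul_succ_eq, show n + k + 1 - k = n + 1 by omega, show n + k + 1 = n + 1 + k by omega]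
    have h₂ := choose_mul_succ_eq n k
    zify [hk] at h₁ h₂ ⊢
    linear_combination (-((n + 1).choose k : ℤ)) * h₁ - ((n + k).choose k : ℤ) * h₂
  · simp [choose_eq_zero_of_lt hk, choose_eq_zero_of_lt (show n < k by omega)]

theorem choose_mul_choose_add_succ_right (m j : ℕ) :
    m.choose j * (m + 1 + j).choose j + m.choose (j + 1) * (m + 1 + (j + 1)).choose (j + 1) =
      (m + 1).choose (j + 1) * (m + (j + 1)).choose (j + 1) := by
  rcases le_or_gt j m with hj | hj
  · have h₁ := choose_succ_right_eq (m + 1 + j) j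
    have h₂ := choose_succ_right_eq m j
    rw [show m + 1 + j - j = m + 1 by omega] at h₁
    rw [show m + 1 + (j + 1) = m + 1 + j + 1 by omega, choose_succ_succ' (m + 1 + j),
      choose_succ_succ', show m + (j + 1) = m + 1 + j by omega]
    apply Nat.eq_of_mul_eq_mul_right (succ_pos j)
    zify [hj] at h₁ h₂ ⊢
    linear_combination (-(m.choose j : ℤ)) * h₁ + ((m + 1 + j).choose j : ℤ) * h₂
  · simp [choose_eq_zero_of_lt hj, choose_eq_zero_of_lt (show m < j + 1 by omega),
      choose_eq_zero_of_lt (show m + 1 < j + 1 by omega)]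

end Nat

theorem sum_Icc_neg_one_pow_mul_choose_succ_mul_choose_add {R : Type*} [CommRing R] (m j : ℕ) :
    ∑ k ∈ Icc 1 j, (-1 : R) ^ k * (m + 1).choose k * (m + k).choose k =
      (-1) ^ j * m.choose j * (m + 1 + j).choose j - 1 := by
  induction j with
  | zero => simp
  | succ j ih =>
    have h := congrArg (Nat.cast : ℕ → R) (Nat.choose_mul_choose_add_succ_right m j)
    push_cast at h
    rw [sum_Icc_succ_top (by omega), ih]
    linear_combination (-1 : R) ^ j * h

theorem sum_Icc_neg_one_pow_mul_choose_succ_mul_choose_add_self {R : Type*} [CommRing R] (m : ℕ) :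
    ∑ k ∈ Icc 1 (m + 1), (-1 : R) ^ k * (m + 1).choose k * (m + k).choose k = -1 := by
  simp [sum_Icc_neg_one_pow_mul_choose_succ_mul_choose_add]

theorem neg_one_pow_mul_choose_mul_choose_add_div_succ_sub {K : Type*} [Field K] [CharZero K]
    {n k : ℕ} (hk : k ≠ 0) :
    (-1 : K) ^ k * (n + 1).choose k * (n + 1 + k).choose k * (1 / k) -
        (-1 : K) ^ k * n.choose k * (n + k).choose k * (1 / k) =
      2 / (n + 1) * ((-1) ^ k * (n + 1).choose k * (n + k).choose k) := by
  have h := congrArg (Nat.cast : ℕ → K) (Nat.choose_mul_choose_add_succ_left n k)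
  push_cast at h
  field_simp
  linear_combination h

theorem sum_Icc_neg_one_pow_mul_choose_mul_choose_add_div (n : ℕ) :
    ∑ k ∈ Icc 1 n, (-1 : ℚ) ^ k * n.choose k * (n + k).choose k * (1 / k) = -2 * harmonic n := by
  induction n with
  | zero => simp
  | succ n ih =>
    calc ∑ k ∈ Icc 1 (n + 1), (-1 : ℚ) ^ k * (n + 1).choose k * (n + 1 + k).choose k * (1 / k)
        = ∑ k ∈ Icc 1 (n + 1), ((-1 : ℚ) ^ k * n.choose k * (n + k).choose k * (1 / k) +
            2 / (n + 1) * ((-1) ^ k * (n + 1).choose k * (n + k).choose k)) := by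
          refine sum_congr rfl fun k hk => ?_
          rw [← neg_one_pow_mul_choose_mul_choose_add_div_succ_sub (by simp at hk; omega)]
          ring
      _ = -2 * harmonic n + 2 / (n + 1) * -1 := by
          rw [sum_add_distrib, ← mul_sum, sum_Icc_neg_one_pow_mul_choose_succ_mul_choose_add_self,
            sum_Icc_succ_top (by omega), ih, Nat.choose_succ_self]
          simp
      _ = -2 * harmonic (n + 1) := by
          rw [harmonic_succ]
          push_cast
          ring

theorem stmt_0_general (n : ℕ) :
    ∑ k ∈ Finset.Icc 1 n,
      ((-1 : ℚ)^k * (n.choose k) * ((n + k).choose k) * (1 / k))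
      = -2 * ∑ j ∈ Finset.Icc 1 n, (1 / j : ℚ) := by
  rw [sum_Icc_neg_one_pow_mul_choose_mul_choose_add_div, harmonic_eq_sum_Icc]
  simp only [one_div]

theorem stmt_0 (n : ℕ) (hn : 0 < n) :
    ∑ k ∈ Finset.Icc 1 n,
      ((-1 : ℚ)^k * (n.choose k) * ((n + k).choose k) * (1 / k))
      = -2 * ∑ j ∈ Finset.Icc 1 n, (1 / j : ℚ) :=
  stmt_0_general n
end

section
/- For every positive integer n and every rational y that is not a nonpositive integer in {0,-1,...,-n}, the identity ∑_{k=0}^n (-1)^k * C(n,k) * C(n+k,k) * 1/(k+y) = ((-1)^n / y) * ∏_{j=1}^n (y-j)/(y+j) holds. -/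
open Finset Polynomial

private lemma icc_prod_aux (m : ℕ) : ∀ n : ℕ, (∏ j ∈ Icc 1 n, (m + j)) * m.factorial = (n + m).factorial
  | 0 => by simp
  | n + 1 => by
    rw [Finset.prod_Icc_succ_top (Nat.le_add_left 1 n), mul_right_comm, icc_prod_aux m n,
      show n + 1 + m = (n + m) + 1 by omega, Nat.factorial_succ]
    ring

private lemma nat_key (n m : ℕ) (hm : m ≤ n) :
    n.choose m * (n+m).choose m * (m.factorial * (n-m).factorial) * m.factorial
      = (n+m).factorial := by
  have h1 : n.choose m * m.factorial * (n - m).factorial = n.factorial :=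
    Nat.choose_mul_factorial_mul_factorial hm
  have h2 : (n+m).choose m * m.factorial * ((n+m) - m).factorial = (n+m).factorial :=
    Nat.choose_mul_factorial_mul_factorial (Nat.le_add_left m n)
  rw [Nat.add_sub_cancel] at h2
  calc n.choose m * (n+m).choose m * (m.factorial * (n-m).factorial) * m.factorial
      = (n+m).choose m * m.factorial * (n.choose m * m.factorial * (n-m).factorial) := by ring
    _ = (n+m).factorial := by rw [h1, h2]

private lemma prod_erase_eval (n m : ℕ) (hm : m ≤ n) :
    ∏ j ∈ (range (n+1)).erase m, ((j:ℚ) - m)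
      = (-1)^m * (m.factorial : ℚ) * ((n - m).factorial : ℚ) := by
  have hset : (range (n+1)).erase m = range m ∪ Ico (m+1) (n+1) := by
    ext j
    simp only [mem_erase, mem_range, mem_union, mem_Ico]
    omega
  have hdisj : Disjoint (range m) (Ico (m+1) (n+1)) := by
    simp only [Finset.disjoint_left, mem_range, mem_Ico]
    omega
  rw [hset, Finset.prod_union hdisj]
  have h1 : ∏ j ∈ range m, ((j:ℚ) - m) = (-1)^m * (m.factorial : ℚ) := by
    have hc : ∀ j ∈ range m, ((j:ℚ) - m) = (-1) * ((m - j : ℕ) : ℚ) := by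
      intro j hj
      rw [mem_range] at hj
      rw [Nat.cast_sub hj.le]
      ring
    have hnat : ∏ j ∈ range m, (m - j) = m.factorial := by
      rw [← Finset.prod_range_reflect (fun j => m - j) m,
        ← Finset.prod_range_add_one_eq_factorial m]
      apply Finset.prod_congr rfl
      intro j hj
      rw [mem_range] at hj
      omega
    rw [Finset.prod_congr rfl hc, Finset.prod_mul_distrib, Finset.prod_const,
      ← Nat.cast_prod, hnat, Finset.card_range]
  have h2 : ∏ j ∈ Ico (m+1) (n+1), ((j:ℚ) - m) = ((n - m).factorial : ℚ) := by
    rw [Finset.prod_Ico_eq_prod_range]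
    have hc : ∀ i ∈ range (n + 1 - (m+1)), (((m + 1 + i : ℕ)):ℚ) - m = ((i+1 : ℕ) : ℚ) := by
      intro i _
      push_cast
      ring
    rw [Finset.prod_congr rfl hc, ← Nat.cast_prod, Finset.prod_range_add_one_eq_factorial,
      show n + 1 - (m+1) = n - m by omega]
  rw [h1, h2]

theorem stmt_1 (n : ℕ) (hn : 0 < n) (y : ℚ) (hy : ∀ j : ℕ, j ≤ n → y ≠ -(j : ℚ)) :
    ∑ k ∈ Finset.range (n + 1),
      ((-1 : ℚ)^k * (n.choose k) * ((n + k).choose k) * (1 / ((k : ℚ) + y)))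
      = ((-1 : ℚ)^n / y) * ∏ j ∈ Finset.Icc 1 n, ((y - j) / (y + j)) := by
  have hsgn : ∀ t : ℕ, (-1:ℚ)^t * (-1:ℚ)^t = 1 := fun t => by
    rw [← pow_add]
    exact Even.neg_one_pow ⟨t, rfl⟩
  set a : ℕ → ℚ := fun k => (-1 : ℚ)^k * (n.choose k) * ((n + k).choose k) with ha
  set P : Polynomial ℚ := ∑ k ∈ range (n+1),
      C (a k) * ∏ j ∈ (range (n+1)).erase k, (X + C (j:ℚ)) with hP
  set Q : Polynomial ℚ := C ((-1:ℚ)^n) * ∏ j ∈ Icc 1 n, (X - C (j:ℚ)) with hQ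
  have hPeval : ∀ m : ℕ, m ≤ n → P.eval (-(m:ℚ)) =
      a m * ∏ j ∈ (range (n+1)).erase m, ((j:ℚ) - m) := by
    intro m hm
    rw [hP, Polynomial.eval_finset_sum]
    rw [Finset.sum_eq_single m]
    · simp only [eval_mul, eval_C, eval_prod, eval_add, eval_X]
      congr 1
      exact Finset.prod_congr rfl fun j _ => by ring
    · intro k hk hkm
      simp only [eval_mul, eval_C, eval_prod, eval_add, eval_X]
      have hmem : m ∈ (range (n+1)).erase k :=
        Finset.mem_erase.mpr ⟨fun h => hkm h.symm, Finset.mem_range.mpr (by omega)⟩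
      rw [Finset.prod_eq_zero hmem (by ring)]
      ring
    · intro h
      exact absurd (Finset.mem_range.mpr (by omega)) h
  have hQeval : ∀ m : ℕ, Q.eval (-(m:ℚ)) =
      (-1:ℚ)^n * ∏ j ∈ Icc 1 n, (-(m:ℚ) - j) := by
    intro m
    simp only [hQ, eval_mul, eval_C, eval_prod, eval_sub, eval_X]
  have hkey : ∀ m : ℕ, m ≤ n → P.eval (-(m:ℚ)) = Q.eval (-(m:ℚ)) := by
    intro m hm
    rw [hPeval m hm, hQeval m, prod_erase_eval n m hm]
    have hIcc : ∏ j ∈ Icc 1 n, (-(m:ℚ) - j)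
        = (-1:ℚ)^n * ((∏ j ∈ Icc 1 n, (m + j) : ℕ) : ℚ) := by
      have hc : ∀ j ∈ Icc 1 n, (-(m:ℚ) - j) = (-1) * ((m:ℚ) + j) := fun j _ => by ring
      rw [Finset.prod_congr rfl hc, Finset.prod_mul_distrib, Finset.prod_const, Nat.card_Icc]
      push_cast
      norm_num
    rw [hIcc]
    have hfac : ((m.factorial : ℚ)) ≠ 0 := by positivity
    apply mul_right_cancel₀ hfac
    have hL : a m * ((-1:ℚ)^m * (m.factorial : ℚ) * ((n - m).factorial : ℚ)) * (m.factorial : ℚ)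
        = ((n.choose m * (n+m).choose m * (m.factorial * (n-m).factorial) * m.factorial : ℕ) : ℚ) := by
      rw [ha]
      push_cast
      calc (-1:ℚ)^m * (n.choose m : ℚ) * ((n+m).choose m : ℚ)
            * ((-1:ℚ)^m * (m.factorial : ℚ) * ((n - m).factorial : ℚ)) * (m.factorial : ℚ)
          = ((-1:ℚ)^m * (-1:ℚ)^m) * ((n.choose m : ℚ) * ((n+m).choose m : ℚ)
            * ((m.factorial : ℚ) * ((n - m).factorial : ℚ)) * (m.factorial : ℚ)) := by ring
        _ = _ := by rw [hsgn]; ring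
    rw [hL, nat_key n m hm]
    have hR : (-1:ℚ)^n * ((-1:ℚ)^n * ((∏ j ∈ Icc 1 n, (m + j) : ℕ) : ℚ)) * (m.factorial : ℚ)
        = (((∏ j ∈ Icc 1 n, (m + j)) * m.factorial : ℕ) : ℚ) := by
      push_cast
      calc (-1:ℚ)^n * ((-1:ℚ)^n * ((∏ j ∈ Icc 1 n, ((m:ℚ) + j)))) * (m.factorial : ℚ)
          = ((-1:ℚ)^n * (-1:ℚ)^n) * ((∏ j ∈ Icc 1 n, ((m:ℚ) + j)) * (m.factorial : ℚ)) := by ring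
        _ = _ := by rw [hsgn]; ring
    rw [hR, icc_prod_aux m n]
  have hPQ : P = Q := by
    have hdegP : P.natDegree ≤ n := by
      apply Polynomial.natDegree_sum_le_of_forall_le
      intro k hk
      refine le_trans Polynomial.natDegree_mul_le ?_
      rw [Polynomial.natDegree_C]
      simp only [zero_add]
      refine le_trans (Polynomial.natDegree_prod_le _ _) ?_
      calc ∑ j ∈ (range (n+1)).erase k, (X + C (j:ℚ)).natDegree
          ≤ ∑ _j ∈ (range (n+1)).erase k, 1 := by
            apply Finset.sum_le_sum
            intro j _
            exact le_of_eq (Polynomial.natDegree_X_add_C _)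
        _ ≤ n := by
            rw [Finset.sum_const, smul_eq_mul, mul_one,
              Finset.card_erase_of_mem (Finset.mem_range.mpr (Finset.mem_range.mp hk))]
            simp
    have hdegQ : Q.natDegree ≤ n := by
      refine le_trans Polynomial.natDegree_mul_le ?_
      rw [Polynomial.natDegree_C]
      simp only [zero_add]
      refine le_trans (Polynomial.natDegree_prod_le _ _) ?_
      calc ∑ j ∈ Icc 1 n, (X - C (j:ℚ)).natDegree
          ≤ ∑ _j ∈ Icc 1 n, 1 := by
            apply Finset.sum_le_sum
            intro j _
            exact le_of_eq (Polynomial.natDegree_X_sub_C _)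
        _ = n := by simp
    have hsub : P - Q = 0 := by
      apply Polynomial.eq_zero_of_natDegree_lt_card_of_eval_eq_zero' (P - Q)
        ((range (n+1)).image (fun m : ℕ => -(m:ℚ)))
      · intro x hx
        rw [Finset.mem_image] at hx
        obtain ⟨m, hm, rfl⟩ := hx
        rw [Polynomial.eval_sub, hkey m (by rw [Finset.mem_range] at hm; omega), sub_self]
      · rw [Finset.card_image_of_injective _ (fun u v h => by
            have := neg_injective h; exact_mod_cast this), Finset.card_range]
        have : (P - Q).natDegree ≤ n :=
          le_trans (Polynomial.natDegree_sub_le _ _) (max_le hdegP hdegQ)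
        omega
    exact sub_eq_zero.mp hsub
  -- now divide the polynomial identity evaluated at y
  have hD : ∀ j : ℕ, j ≤ n → y + (j:ℚ) ≠ 0 := fun j hj h => hy j hj (by linarith)
  set D : ℚ := ∏ j ∈ range (n+1), (y + (j:ℚ)) with hDdef
  have hDne : D ≠ 0 :=
    Finset.prod_ne_zero_iff.mpr fun j hj => hD j (by rw [Finset.mem_range] at hj; omega)
  have hLHS : ∑ k ∈ Finset.range (n + 1),
      ((-1 : ℚ)^k * (n.choose k) * ((n + k).choose k) * (1 / ((k : ℚ) + y)))
      = P.eval y / D := by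
    rw [hP, Polynomial.eval_finset_sum, Finset.sum_div]
    apply Finset.sum_congr rfl
    intro k hk
    simp only [eval_mul, eval_C, eval_prod, eval_add, eval_X]
    have hk' : k ≤ n := by rw [Finset.mem_range] at hk; omega
    have hDfac : D = (y + (k:ℚ)) * ∏ j ∈ (range (n+1)).erase k, (y + (j:ℚ)) := by
      rw [hDdef]
      exact (Finset.mul_prod_erase _ _ hk).symm
    have h1 : (y + (k:ℚ)) ≠ 0 := hD k hk'
    have h2 : (∏ j ∈ (range (n+1)).erase k, (y + (j:ℚ))) ≠ 0 :=
      Finset.prod_ne_zero_iff.mpr fun j hj =>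
        hD j (by rw [Finset.mem_erase, Finset.mem_range] at hj; omega)
    rw [hDfac, mul_div_mul_right _ _ h2, ha, add_comm (k:ℚ) y, mul_one_div]
  have hy0 : y ≠ 0 := fun h => hy 0 (by omega) (by simp [h])
  have hIprod : (∏ j ∈ Icc 1 n, (y + (j:ℚ))) ≠ 0 :=
    Finset.prod_ne_zero_iff.mpr fun j hj => hD j (Finset.mem_Icc.mp hj).2
  have hDsplit : D = y * ∏ j ∈ Icc 1 n, (y + (j:ℚ)) := by
    rw [hDdef]
    have hins : range (n+1) = insert 0 (Icc 1 n) := by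
      ext j
      simp only [mem_range, mem_insert, mem_Icc]
      omega
    rw [hins, Finset.prod_insert (by simp)]
    norm_num
  have hRHS : ((-1 : ℚ)^n / y) * ∏ j ∈ Finset.Icc 1 n, ((y - j) / (y + j))
      = Q.eval y / D := by
    rw [hQ]
    simp only [eval_mul, eval_C, eval_prod, eval_sub, eval_X]
    rw [Finset.prod_div_distrib, hDsplit]
    field_simp
  rw [hLHS, hRHS, hPQ]
end

section
/- Let p be a prime with p ≥ 5, let a be an integer not divisible by p, and let d be an integer. Then q_p(a^d) ≡ d*q_p(a) + p*C(d,2)*q_p(a)^2 (mod p^2), where q_p(x) = (x^{p-1} - 1)/p is the Fermat quotient. -/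
/-!
Write `a ^ (p - 1) = 1 + p q` with `q = q_p(a)`, so `(a ^ d) ^ (p - 1) = (1 + t) ^ d` with
`t = p q`, `‖t‖ ≤ 1 / p`. In an ultrametric field the second-order binomial remainder of
`(1 + t) ^ d` has norm at most `‖t‖ ^ 3`: it satisfies `R (e + 1) = (1 + t) R e + C(e, 2) t ^ 3`
and `1 + t` is a unit of norm one, so induction runs in both directions over `ℤ`.
Dividing by `p` leaves a bound `p ^ (-3) * p = p ^ (-2)`.
-/

theorem Int.mul_sub_one_ediv_two_succ (e : ℤ) :
    (e + 1) * (e + 1 - 1) / 2 = e * (e - 1) / 2 + e := by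
  rw [show (e + 1) * (e + 1 - 1) = e * (e - 1) + e * 2 by ring,
    Int.add_mul_ediv_right _ _ two_ne_zero]

section BinomialRemainder

variable {K : Type*} [Field K]

/-- The division by `2` is exact in `ℤ`, since `d * (d - 1)` is even. -/
def binomialRemainder (t : K) (d : ℤ) : K :=
  (1 + t) ^ d - 1 - d * t - ((d * (d - 1) / 2 : ℤ) : K) * t ^ 2

theorem binomialRemainder_add_one {t : K} (ht : 1 + t ≠ 0) (e : ℤ) :
    binomialRemainder t (e + 1)
      = (1 + t) * binomialRemainder t e + ((e * (e - 1) / 2 : ℤ) : K) * t ^ 3 := by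
  rw [binomialRemainder, binomialRemainder, Int.mul_sub_one_ediv_two_succ, zpow_add_one₀ ht]
  push_cast
  ring

theorem zpow_sub_one_div_sub_eq_binomialRemainder_div [CharZero K] {c : K} (hc : c ≠ 0) (x : K) (d : ℤ) :
    ((1 + c * x) ^ d - 1) / c - (d * x + c * (d * (d - 1) / 2) * x ^ 2)
      = binomialRemainder (c * x) d / c := by
  rw [binomialRemainder, Int.cast_div (Int.even_mul_pred_self d).two_dvd (by norm_num)]
  push_cast
  field_simp
  ring

end BinomialRemainder

theorem norm_binomialRemainder_le {K : Type*} [NormedField K] [IsUltrametricDist K] {t : K}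
    (ht : ‖t‖ < 1) (d : ℤ) : ‖binomialRemainder t d‖ ≤ ‖t‖ ^ 3 := by
  have h_unit : ‖1 + t‖ = 1 := by
    rw [IsUltrametricDist.norm_add_eq_max_of_norm_ne_norm (by simpa using ht.ne'), norm_one,
      max_eq_left ht.le]
  have h_ne : 1 + t ≠ 0 := norm_ne_zero_iff.mp (by simp [h_unit])
  have h_cube (e : ℤ) : ‖((e * (e - 1) / 2 : ℤ) : K) * t ^ 3‖ ≤ ‖t‖ ^ 3 := by
    rw [norm_mul, norm_pow]
    exact mul_le_of_le_one_left (by positivity) (IsUltrametricDist.norm_intCast_le_one K _)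
  induction d using Int.induction_on with
  | zero => simp [binomialRemainder]
  | succ n ih =>
    rw [binomialRemainder_add_one h_ne]
    refine (IsUltrametricDist.norm_add_le_max _ _).trans (max_le ?_ (h_cube _))
    rwa [norm_mul, h_unit, one_mul]
  | pred n ih =>
    have h := binomialRemainder_add_one h_ne (-(n : ℤ) - 1)
    rw [sub_add_cancel] at h
    rw [← one_mul ‖_‖, ← h_unit, ← norm_mul, eq_sub_iff_add_eq.mpr h.symm, sub_eq_add_neg]
    exact (IsUltrametricDist.norm_add_le_max _ _).trans
      (max_le ih ((norm_neg _).trans_le (h_cube _)))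

theorem stmt_2_general (p : ℕ) [Fact p.Prime] (a : ℤ) (ha : ¬ (p : ℤ) ∣ a) (d : ℤ) :
    ‖(((((a : ℚ) ^ d) ^ (p - 1) - 1) / p
        - ((d : ℚ) * (((a : ℚ) ^ (p - 1) - 1) / p)
          + p * ((d : ℚ) * (d - 1) / 2) * (((a : ℚ) ^ (p - 1) - 1) / p) ^ 2) : ℚ)
      : ℚ_[p])‖ ≤ (p : ℝ) ^ (-2 : ℤ) := by
  have hp : p.Prime := Fact.out
  obtain ⟨m, hm⟩ := Int.prime_dvd_pow_sub_one hp
    ((Nat.prime_iff_prime_int.mp hp).coprime_iff_not_dvd.mpr ha).symm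
  have hx : (a : ℚ) ^ (p - 1) = 1 + p * m := by
    rw [← sub_eq_iff_eq_add']
    exact_mod_cast hm
  have hp0 : (p : ℚ_[p]) ≠ 0 := by exact_mod_cast hp.ne_zero
  have hpm : ‖(p : ℚ_[p]) * m‖ ≤ ‖(p : ℚ_[p])‖ := by
    rw [norm_mul]
    exact mul_le_of_le_one_right (norm_nonneg _) (Padic.norm_int_le_one m)
  rw [← zpow_natCast, ← zpow_mul, mul_comm, zpow_mul, zpow_natCast, hx]
  push_cast
  rw [add_sub_cancel_left, mul_div_cancel_left₀ _ hp0,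
    zpow_sub_one_div_sub_eq_binomialRemainder_div hp0, norm_div]
  calc ‖binomialRemainder ((p : ℚ_[p]) * m) d‖ / ‖(p : ℚ_[p])‖
      ≤ ‖(p : ℚ_[p])‖ ^ 3 / ‖(p : ℚ_[p])‖ := by
        gcongr
        exact (norm_binomialRemainder_le (hpm.trans_lt Padic.norm_p_lt_one) d).trans
          (by gcongr)
    _ = (p : ℝ) ^ (-2 : ℤ) := by
        rw [Padic.norm_p]
        field_simp

theorem stmt_2 (p : ℕ) [Fact p.Prime] (hp5 : 5 ≤ p) (a : ℤ) (ha : ¬ (p : ℤ) ∣ a) (d : ℤ) :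
    ‖(((((a : ℚ) ^ d) ^ (p - 1) - 1) / p
        - ((d : ℚ) * (((a : ℚ) ^ (p - 1) - 1) / p)
          + p * ((d : ℚ) * (d - 1) / 2) * (((a : ℚ) ^ (p - 1) - 1) / p) ^ 2) : ℚ)
      : ℚ_[p])‖ ≤ (p : ℝ) ^ (-2 : ℤ) :=
  stmt_2_general p a ha d
end

section
/- Let p ≥ 5 be a prime and let k be an integer with 0 ≤ k < p/3. Then (-1)^k * C(⌊p/3⌋, k) * C(⌊p/3⌋ + k, k) ≡ (3k)!/(k!^3) * 3^{-3k} (mod p), where 3^{-3k} denotes the inverse of 3^{3k} modulo p. -/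
open Finset

lemma fact3k (k : ℕ) : (3 * k).factorial =
    3 ^ k * k.factorial * (∏ i ∈ range k, (3 * i + 1)) * (∏ i ∈ range k, (3 * i + 2)) := by
  induction k with
  | zero => simp
  | succ k ih =>
    have h : 3 * (k + 1) = (3 * k + 1) + 1 + 1 := by ring
    rw [h, Nat.factorial_succ, Nat.factorial_succ, Nat.factorial_succ, ih,
      prod_range_succ, prod_range_succ, pow_succ, Nat.factorial_succ]
    ring

lemma ascFact_prod (n : ℕ) : ∀ k : ℕ, n.ascFactorial k = ∏ i ∈ range k, (n + i)
  | 0 => by simp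
  | k + 1 => by rw [Nat.ascFactorial_succ, prod_range_succ, ascFact_prod n k]; ring

theorem stmt_3 (p : ℕ) [Fact p.Prime] (hp5 : 5 ≤ p) (k : ℕ) (hk : 3 * k < p) :
    ((-1 : ZMod p) ^ k * ((p / 3).choose k) * ((p / 3 + k).choose k)
      = (((3 * k).factorial / (k.factorial) ^ 3 : ℕ) : ZMod p) * ((27 : ZMod p)⁻¹) ^ k) := by
  have hp : p.Prime := Fact.out
  set m := p / 3 with hm
  set r := p % 3 with hr
  have h3 : ¬ (3 ∣ p) := by
    intro h
    rcases (hp.eq_one_or_self_of_dvd 3 h) with h' | h' <;> omega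
  have hrm : 3 * m + r = p := by rw [hm, hr]; omega
  have hrlt : r < 3 := by rw [hr]; omega
  have hr12 : r = 1 ∨ r = 2 := by
    have : r ≠ 0 := fun h => h3 (Nat.dvd_of_mod_eq_zero h)
    omega
  have hkm : k ≤ m := by omega
  have h3ne : (3 : ZMod p) ≠ 0 := by
    intro h
    have := (ZMod.natCast_eq_zero_iff 3 p).mp (by exact_mod_cast h)
    have := Nat.le_of_dvd (by norm_num) this
    omega
  have h27ne : (27 : ZMod p) ≠ 0 := by
    rw [show (27 : ZMod p) = 3 ^ 3 by norm_num]; exact pow_ne_zero _ h3ne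
  have hfacne : ((k.factorial : ZMod p)) ≠ 0 := by
    have : ¬ p ∣ k.factorial := by
      intro hdvd
      have := (Nat.Prime.dvd_factorial hp).mp hdvd
      omega
    simpa [ZMod.natCast_eq_zero_iff] using this
  have hfac3 : ((k.factorial : ZMod p)) ^ 3 ≠ 0 := pow_ne_zero _ hfacne
  have hdvd : k.factorial ^ 3 ∣ (3 * k).factorial := by
    have h1 : k.factorial * k.factorial ∣ (2 * k).factorial := by
      have := Nat.factorial_mul_factorial_dvd_factorial (show k ≤ 2 * k by omega)
      simpa [two_mul, Nat.add_sub_cancel] using this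
    have h2 : k.factorial * (2 * k).factorial ∣ (3 * k).factorial := by
      have := Nat.factorial_mul_factorial_dvd_factorial (show k ≤ 3 * k by omega)
      have e : 3 * k - k = 2 * k := by omega
      rwa [e] at this
    calc k.factorial ^ 3 = k.factorial * (k.factorial * k.factorial) := by ring
    _ ∣ k.factorial * (2 * k).factorial := mul_dvd_mul_left _ h1
    _ ∣ (3 * k).factorial := h2
  have hdiv : (((3 * k).factorial / (k.factorial) ^ 3 : ℕ) : ZMod p) * (k.factorial : ZMod p) ^ 3
      = ((3 * k).factorial : ZMod p) := by
    rw [← Nat.cast_pow, ← Nat.cast_mul, Nat.div_mul_cancel hdvd]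
  have hD : ((m.choose k : ℕ) : ZMod p) * (k.factorial : ZMod p)
      = ∏ i ∈ range k, ((m : ZMod p) - i) := by
    rw [← Nat.cast_mul, mul_comm (m.choose k), ← Nat.descFactorial_eq_factorial_mul_choose,
      Nat.descFactorial_eq_prod_range, Nat.cast_prod]
    refine Finset.prod_congr rfl fun i hi => ?_
    have : i ≤ m := le_trans (le_of_lt (mem_range.mp hi)) hkm
    push_cast [Nat.cast_sub this]
    ring
  have hA : (((m + k).choose k : ℕ) : ZMod p) * (k.factorial : ZMod p)
      = ∏ i ∈ range k, ((m : ZMod p) + 1 + i) := by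
    rw [← Nat.cast_mul, mul_comm ((m + k).choose k), ← Nat.descFactorial_eq_factorial_mul_choose,
      Nat.add_descFactorial_eq_ascFactorial, ascFact_prod, Nat.cast_prod]
    push_cast
    ring
  have h3m : (3 : ZMod p) * (m : ZMod p) = -(r : ZMod p) := by
    have : ((3 * m + r : ℕ) : ZMod p) = 0 := by rw [hrm]; exact ZMod.natCast_self p
    push_cast at this
    linear_combination this
  have e27 : (27 : ZMod p) ^ k = 3 ^ k * (3 ^ k * 3 ^ k) := by
    rw [show (27 : ZMod p) = 3 * (3 * 3) by norm_num, mul_pow, mul_pow]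
  have eneg3 : ((-3 : ZMod p)) ^ k = (-1) ^ k * 3 ^ k := by
    rw [show ((-3 : ZMod p)) = -1 * 3 by norm_num, mul_pow]
  have key : (-1 : ZMod p) ^ k * ((p / 3).choose k) * ((p / 3 + k).choose k)
      * (27 : ZMod p) ^ k * (k.factorial : ZMod p) ^ 3
      = ((3 * k).factorial : ZMod p) := by
    calc (-1 : ZMod p) ^ k * ((p / 3).choose k) * ((p / 3 + k).choose k)
        * (27 : ZMod p) ^ k * (k.factorial : ZMod p) ^ 3
        = ((-1 : ZMod p) ^ k * (3:ZMod p) ^ k * (((m.choose k : ℕ) : ZMod p) * (k.factorial : ZMod p)))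
          * ((3:ZMod p) ^ k * ((((m + k).choose k : ℕ) : ZMod p) * (k.factorial : ZMod p)))
          * ((3:ZMod p) ^ k * (k.factorial : ZMod p)) := by
          rw [e27]; push_cast; try ring
      _ = (∏ i ∈ range k, ((-3 : ZMod p) * ((m : ZMod p) - i)))
          * (∏ i ∈ range k, ((3 : ZMod p) * ((m : ZMod p) + 1 + i)))
          * ((3:ZMod p) ^ k * (k.factorial : ZMod p)) := by
          rw [hD, hA, Finset.prod_mul_distrib, Finset.prod_mul_distrib,
            Finset.prod_const, Finset.prod_const, Finset.card_range, eneg3]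
          try ring
      _ = (∏ i ∈ range k, ((3 : ZMod p) * i + r))
          * (∏ i ∈ range k, ((3 : ZMod p) * i + (3 - r)))
          * ((3:ZMod p) ^ k * (k.factorial : ZMod p)) := by
          congr 2
          · exact Finset.prod_congr rfl fun i _ => by linear_combination (-1 : ZMod p) * h3m
          · exact Finset.prod_congr rfl fun i _ => by linear_combination h3m
      _ = ((3 * k).factorial : ZMod p) := by
          rw [fact3k]
          push_cast
          rcases hr12 with h | h <;> rw [h] <;> push_cast <;> norm_num <;> ring
  have h1 : (-1 : ZMod p) ^ k * ((p / 3).choose k) * ((p / 3 + k).choose k)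
      * (27 : ZMod p) ^ k
      = (((3 * k).factorial / (k.factorial) ^ 3 : ℕ) : ZMod p) :=
    mul_right_cancel₀ hfac3 (key.trans hdiv.symm)
  calc (-1 : ZMod p) ^ k * ((p / 3).choose k) * ((p / 3 + k).choose k)
      = (-1 : ZMod p) ^ k * ((p / 3).choose k) * ((p / 3 + k).choose k)
        * (27 : ZMod p) ^ k * ((27 : ZMod p)⁻¹) ^ k := by
        have hone : (27 : ZMod p) ^ k * ((27 : ZMod p)⁻¹) ^ k = 1 := by
          rw [← mul_pow, mul_inv_cancel₀ h27ne, one_pow]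
        linear_combination (-((-1 : ZMod p) ^ k * ((p / 3).choose k) * ((p / 3 + k).choose k))) * hone
    _ = (((3 * k).factorial / (k.factorial) ^ 3 : ℕ) : ZMod p) * ((27 : ZMod p)⁻¹) ^ k := by
        rw [h1]
end

section
/- Let p ≥ 5 be a prime. Then ∑_{k=1}^{p-1} (3k)!/(k!^3) * 27^{-k} * (1/k) ≡ 3*q_p(3) (mod p), where 27^{-k} denotes the inverse of 27^k modulo p and q_p(3) = (3^{p-1}-1)/p. -/
/-!
Choose `m < p` with `3m + 1 ≡ 0 (mod p)`. After multiplication by `k!²`, both `(3k)!/k!³` and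
`C(m,k) C(m+k,k)` are products over `j < k`, of `3(3j+1)(3j+2)` and `(m-j)(m+1+j)` respectively,
and `3(3j+1)(3j+2) ≡ -27(m-j)(m+1+j)`. Hence the sum equals `∑_{k ≤ m} (-1)^k C(m,k) C(m+k,k)/k`,
which is `-2 H_m` by Vandermonde's identity and two alternating binomial sums. Finally
`H_m ≡ H_{⌊p/3⌋}`, and expanding `3^{p-1} (p-1)! = ∏_{k<p} (3k mod p + p ⌊3k/p⌋)` modulo `p²` gives
`3 q_p(3) ≡ ∑_{k<p} ⌊3k/p⌋/k ≡ -2 H_{⌊p/3⌋}`.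
-/

open Finset Nat

theorem Finset.sum_Icc_one_eq_sum_range {M : Type*} [AddCommMonoid M] (f : ℕ → M) (n : ℕ) :
    ∑ k ∈ Icc 1 n, f k = ∑ k ∈ range n, f (k + 1) := by
  rw [range_eq_Ico, sum_Ico_add', zero_add, Ico_add_one_right_eq_Icc]

theorem Nat.add_choose_right_eq_sum_range (m k : ℕ) :
    (m + k).choose k = ∑ i ∈ range (m + 1), m.choose i * k.choose i := by
  rw [← choose_symm_add, add_choose_eq, sum_antidiagonal_eq_sum_range_succ_mk,
    ← sum_range_reflect]
  refine sum_congr rfl fun i hi => ?_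
  have hi : i ≤ m := mem_range_succ_iff.mp hi
  rw [succ_sub_one, choose_symm hi, Nat.sub_sub_self hi]

theorem Int.alternating_sum_range_choose_mul_choose {n s : ℕ} (hs : s < n) :
    ∑ l ∈ Finset.range (n + 1), (-1 : ℤ) ^ l * n.choose l * l.choose s = 0 := by
  have hsplit := sum_range_add_sum_Ico (fun l => (-1 : ℤ) ^ l * n.choose l * l.choose s)
    (by omega : s ≤ n + 1)
  rw [sum_eq_zero fun l hl => by rw [choose_eq_zero_of_lt (mem_range.mp hl), Nat.cast_zero,
      mul_zero], zero_add, sum_Ico_eq_sum_range, show n + 1 - s = n - s + 1 by omega] at hsplit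
  rw [← hsplit, ← mul_zero ((-1 : ℤ) ^ s * n.choose s),
    ← Int.alternating_sum_range_choose_of_ne (by omega : n - s ≠ 0), mul_sum]
  refine sum_congr rfl fun j _ => ?_
  have h := choose_mul (n := n) (le_add_right s j)
  rw [add_tsub_cancel_left] at h
  have h' : (n.choose (s + j) : ℤ) * (s + j).choose s = n.choose s * (n - s).choose j := by
    exact_mod_cast h
  linear_combination (-1 : ℤ) ^ (s + j) * h'

theorem Int.alternating_sum_range_choose_succ_mul_choose {m s : ℕ} (hs : s < m) :
    ∑ l ∈ Finset.range m, (-1 : ℤ) ^ l * m.choose (l + 1) * l.choose s = (-1) ^ s := by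
  induction m, hs using Nat.le_induction with
  | base =>
    rw [sum_range_succ, sum_eq_zero fun l hl => by
      rw [choose_eq_zero_of_lt (mem_range.mp hl), Nat.cast_zero, mul_zero]]
    simp
  | succ m hs ih =>
    simp only [choose_succ_succ, Nat.cast_add, mul_add, add_mul, sum_add_distrib]
    rw [alternating_sum_range_choose_mul_choose hs, sum_range_succ, ih, choose_succ_self]
    simp

theorem sum_Icc_neg_one_pow_mul_choose {R : Type*} [CommRing R] {n : ℕ} (hn : n ≠ 0) :
    ∑ k ∈ Icc 1 n, (-1) ^ k * (n.choose k : R) = -1 := by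
  have h := congrArg (Int.cast : ℤ → R) (Int.alternating_sum_range_choose_of_ne hn)
  rw [range_eq_Ico, sum_eq_sum_Ico_succ_bot (by omega), Ico_add_one_right_eq_Icc] at h
  simp only [choose_zero_right] at h
  push_cast at h
  linear_combination h

section AlternatingHarmonic

variable {K : Type*} [Field K] {m : ℕ}

theorem sum_Icc_neg_one_pow_mul_choose_mul_inv (hm : ∀ k ∈ Icc 1 m, (k : K) ≠ 0) :
    ∑ k ∈ Icc 1 m, (-1) ^ k * (m.choose k : K) * (k : K)⁻¹ = -∑ k ∈ Icc 1 m, (k : K)⁻¹ := by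
  induction m with
  | zero => simp
  | succ m ih =>
    have hm' : ((m + 1 : ℕ) : K) ≠ 0 := hm _ (by simp)
    have pascal : ∀ k ∈ Icc 1 (m + 1), (-1) ^ k * ((m + 1).choose k : K) * (k : K)⁻¹
        = (-1) ^ k * (m.choose k : K) * (k : K)⁻¹
          + (-1) ^ k * ((m + 1).choose k : K) * ((m + 1 : ℕ) : K)⁻¹ := by
      intro k hk
      obtain ⟨j, rfl⟩ : ∃ j, k = j + 1 := ⟨k - 1, by simp at hk; omega⟩
      have hk' : ((j + 1 : ℕ) : K) ≠ 0 := hm _ hk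
      have h := congrArg (Nat.cast : ℕ → K) (add_one_mul_choose_eq m j)
      rw [choose_succ_succ'] at h ⊢
      push_cast at h hk' hm' ⊢
      field_simp
      linear_combination h
    rw [sum_congr rfl pascal, sum_add_distrib, ← sum_mul, sum_Icc_neg_one_pow_mul_choose (by omega),
      sum_Icc_succ_top (by omega), choose_succ_self, ih fun k hk => hm k (by simp at hk ⊢; omega),
      sum_Icc_succ_top (by omega), Nat.cast_zero, mul_zero, zero_mul, add_zero]
    ring

theorem sum_Icc_neg_one_pow_mul_choose_mul_choose_mul_inv (hm : ∀ k ∈ Icc 1 m, (k : K) ≠ 0)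
    {i : ℕ} (hi : i ∈ Icc 1 m) :
    ∑ k ∈ Icc 1 m, (-1) ^ k * (m.choose k : K) * (k.choose i : K) * (k : K)⁻¹
      = (-1) ^ i * (i : K)⁻¹ := by
  obtain ⟨s, rfl⟩ : ∃ s, i = s + 1 := ⟨i - 1, by simp at hi; omega⟩
  have h := congrArg (Int.cast : ℤ → K)
    (Int.alternating_sum_range_choose_succ_mul_choose (m := m) (s := s) (by simp at hi; omega))
  push_cast at h
  rw [sum_Icc_one_eq_sum_range]
  calc ∑ l ∈ range m, (-1) ^ (l + 1) * (m.choose (l + 1) : K) * ((l + 1).choose (s + 1) : K)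
        * ((l + 1 : ℕ) : K)⁻¹
      = -((s : K) + 1)⁻¹ * ∑ l ∈ range m, (-1) ^ l * (m.choose (l + 1) : K) * (l.choose s : K) := by
        rw [mul_sum]
        refine sum_congr rfl fun l hl => ?_
        have hs : ((s + 1 : ℕ) : K) ≠ 0 := hm _ hi
        have hl : ((l + 1 : ℕ) : K) ≠ 0 := hm _ (by simp at hl ⊢; omega)
        have h := congrArg (Nat.cast : ℕ → K) (add_one_mul_choose_eq l s)
        push_cast at h hs hl ⊢
        field_simp
        linear_combination (-1) ^ l * (m.choose (l + 1) : K) * h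
    _ = (-1) ^ (s + 1) * ((s + 1 : ℕ) : K)⁻¹ := by
        rw [h]
        push_cast
        ring

theorem sum_Icc_neg_one_pow_mul_choose_mul_add_choose_mul_inv (hm : ∀ k ∈ Icc 1 m, (k : K) ≠ 0) :
    ∑ k ∈ Icc 1 m, (-1) ^ k * (m.choose k : K) * ((m + k).choose k : K) * (k : K)⁻¹
      = -2 * ∑ k ∈ Icc 1 m, (k : K)⁻¹ := by
  have vandermonde (k : ℕ) : ((m + k).choose k : K)
      = ∑ i ∈ range (m + 1), (m.choose i : K) * (k.choose i : K) := by
    exact_mod_cast congrArg (Nat.cast : ℕ → K) (add_choose_right_eq_sum_range m k)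
  calc ∑ k ∈ Icc 1 m, (-1) ^ k * (m.choose k : K) * ((m + k).choose k : K) * (k : K)⁻¹
      = ∑ i ∈ range (m + 1), (m.choose i : K)
          * ∑ k ∈ Icc 1 m, (-1) ^ k * (m.choose k : K) * (k.choose i : K) * (k : K)⁻¹ := by
        simp_rw [vandermonde, mul_sum, sum_mul]
        rw [sum_comm]
        exact sum_congr rfl fun i _ => sum_congr rfl fun k _ => by ring
    _ = ∑ k ∈ Icc 1 m, (-1) ^ k * (m.choose k : K) * (k : K)⁻¹
          + ∑ i ∈ Icc 1 m, (-1) ^ i * (m.choose i : K) * (i : K)⁻¹ := by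
        rw [range_eq_Ico, sum_eq_sum_Ico_succ_bot (by omega), Ico_add_one_right_eq_Icc]
        congr 1
        · simp
        · exact sum_congr rfl fun i hi => by
            rw [sum_Icc_neg_one_pow_mul_choose_mul_choose_mul_inv hm hi]; ring
    _ = -2 * ∑ k ∈ Icc 1 m, (k : K)⁻¹ := by
        rw [sum_Icc_neg_one_pow_mul_choose_mul_inv hm]
        ring

end AlternatingHarmonic

theorem Nat.factorial_three_mul (k : ℕ) :
    (3 * k)! = k ! * ∏ j ∈ range k, 3 * (3 * j + 1) * (3 * j + 2) := by
  induction k with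
  | zero => simp
  | succ k ih =>
    rw [show 3 * (k + 1) = 3 * k + 2 + 1 by ring, factorial_succ, factorial_succ,
      factorial_succ, ih, prod_range_succ, factorial_succ]
    ring

theorem Nat.factorial_three_mul_div_mul_factorial_sq (k : ℕ) :
    (3 * k)! / k ! ^ 3 * k ! ^ 2 = ∏ j ∈ range k, 3 * (3 * j + 1) * (3 * j + 2) := by
  have hdvd : k ! ^ 3 ∣ (3 * k)! := by
    have h₁ := factorial_mul_factorial_dvd_factorial_add k k
    have h₂ := factorial_mul_factorial_dvd_factorial_add (k + k) k
    rw [show k + k + k = 3 * k by ring] at h₂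
    exact (by ring : k ! ^ 3 = k ! * k ! * k !) ▸ (mul_dvd_mul_right h₁ _).trans h₂
  apply Nat.eq_of_mul_eq_mul_left (factorial_pos k)
  calc k ! * ((3 * k)! / k ! ^ 3 * k ! ^ 2) = (3 * k)! / k ! ^ 3 * k ! ^ 3 := by ring
    _ = _ := by rw [Nat.div_mul_cancel hdvd, factorial_three_mul]

theorem Nat.cast_descFactorial_eq_prod_range {R : Type*} [CommRing R] (n k : ℕ) :
    (n.descFactorial k : R) = ∏ i ∈ range k, ((n : R) - i) := by
  rcases le_or_gt k n with hk | hk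
  · rw [descFactorial_eq_prod_range, cast_prod]
    exact prod_congr rfl fun i hi => Nat.cast_sub (by simp at hi; omega)
  · rw [descFactorial_eq_zero_iff_lt.mpr hk, cast_zero]
    exact (prod_eq_zero (mem_range.mpr hk) (sub_self _)).symm

theorem Nat.cast_choose_mul_add_choose_mul_factorial_sq {R : Type*} [CommRing R] (m k : ℕ) :
    ((m.choose k * (m + k).choose k * k ! ^ 2 : ℕ) : R)
      = ∏ j ∈ range k, ((m : R) - j) * (m + 1 + j) := by
  have h : m.choose k * (m + k).choose k * k ! ^ 2
      = m.descFactorial k * (m + 1).ascFactorial k := by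
    rw [descFactorial_eq_factorial_mul_choose, ascFactorial_eq_factorial_mul_choose]
    ring
  rw [h, cast_mul, cast_descFactorial_eq_prod_range, ascFactorial_eq_prod_range, prod_mul_distrib]
  push_cast
  ring_nf

theorem Nat.cast_factorial_three_mul_div_mul_factorial_sq {R : Type*} [CommRing R] {m : ℕ}
    (hm : (3 * m + 1 : R) = 0) (k : ℕ) :
    (((3 * k)! / k ! ^ 3 * k ! ^ 2 : ℕ) : R)
      = (-27) ^ k * ((m.choose k * (m + k).choose k * k ! ^ 2 : ℕ) : R) := by
  rw [factorial_three_mul_div_mul_factorial_sq, cast_choose_mul_add_choose_mul_factorial_sq,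
    cast_prod]
  nth_rw 2 [← card_range k]
  rw [pow_card_mul_prod]
  refine prod_congr rfl fun j _ => ?_
  push_cast
  linear_combination (9 * (m : R) + 6) * hm

theorem Nat.prod_Icc_mul_mod_eq_factorial {p a : ℕ} (hp : p.Prime) (ha : ¬p ∣ a) :
    ∏ k ∈ Icc 1 (p - 1), a * k % p = (p - 1)! := by
  rw [← prod_Ico_id_eq_factorial, Ico_add_one_right_eq_Icc]
  have hmaps : ∀ k ∈ Icc 1 (p - 1), a * k % p ∈ Icc 1 (p - 1) := fun k hk => by
    have hk := mem_Icc.mp hk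
    have hndvd : ¬p ∣ a * k := fun h => (hp.dvd_mul.mp h).elim ha
      fun h => absurd (Nat.le_of_dvd (by omega) h) (by omega)
    have := mod_lt (a * k) hp.pos
    have := (Nat.dvd_iff_mod_eq_zero ..).not.mp hndvd
    exact mem_Icc.mpr ⟨by omega, by omega⟩
  have hinj : Set.InjOn (fun k => a * k % p) (Icc 1 (p - 1) : Set ℕ) := fun k hk l hl h => by
    simp only [coe_Icc, Set.mem_Icc] at hk hl
    exact (ModEq.cancel_left_of_coprime ((hp.coprime_iff_not_dvd).mpr ha) h).eq_of_lt_of_lt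
      (by omega) (by omega)
  exact prod_nbij _ hmaps hinj (surjOn_of_injOn_of_card_le _ hmaps hinj le_rfl) fun _ _ => rfl

theorem Finset.prod_add_mul_of_mul_self_eq_zero {ι R : Type*} [DecidableEq ι] [CommRing R]
    {c : R} (hc : c * c = 0) (s : Finset ι) (f g : ι → R) :
    ∏ i ∈ s, (f i + c * g i) = ∏ i ∈ s, f i + c * ∑ i ∈ s, g i * ∏ j ∈ s.erase i, f j := by
  induction s using Finset.induction with
  | empty => simp
  | insert a s ha ih =>
    have herase : ∀ i ∈ s, g i * ∏ j ∈ (insert a s).erase i, f j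
        = f a * (g i * ∏ j ∈ s.erase i, f j) := fun i hi => by
      rw [erase_insert_of_ne (ne_of_mem_of_not_mem hi ha).symm,
        prod_insert fun h => ha (mem_of_mem_erase h), mul_left_comm]
    rw [prod_insert ha, prod_insert ha, ih, sum_insert ha, erase_insert ha, sum_congr rfl herase,
      ← mul_sum]
    linear_combination (g a * ∑ i ∈ s, g i * ∏ j ∈ s.erase i, f j) * hc

def fermatQuotient (p a : ℕ) : ℕ := (a ^ (p - 1) - 1) / p

theorem pow_sub_one_eq_one_add_mul_fermatQuotient {p a : ℕ} (hp : p.Prime) (ha : ¬p ∣ a) :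
    a ^ (p - 1) = 1 + p * fermatQuotient p a := by
  have hfermat : a ^ (p - 1) ≡ 1 [MOD p] := by
    simpa [totient_prime hp] using
      ModEq.pow_totient (coprime_comm.mp ((hp.coprime_iff_not_dvd).mpr ha))
  have hpos : 1 ≤ a ^ (p - 1) := one_le_pow _ _ (pos_of_ne_zero fun h => ha (h ▸ dvd_zero p))
  rw [fermatQuotient, Nat.mul_div_cancel' ((modEq_iff_dvd' hpos).mp hfermat.symm)]
  omega

theorem pow_sub_one_mul_factorial_modEq {p a : ℕ} (hp : p.Prime) (ha : ¬p ∣ a) :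
    a ^ (p - 1) * (p - 1)! ≡ (p - 1)! + p * ∑ k ∈ Icc 1 (p - 1),
      a * k / p * ∏ j ∈ (Icc 1 (p - 1)).erase k, a * j % p [MOD p * p] := by
  have hc : (p : ZMod (p * p)) * p = 0 := by exact_mod_cast ZMod.natCast_self (p * p)
  rw [← ZMod.natCast_eq_natCast_iff]
  calc ((a ^ (p - 1) * (p - 1)! : ℕ) : ZMod (p * p))
      = ∏ k ∈ Icc 1 (p - 1), (((a * k % p : ℕ) : ZMod (p * p)) + p * ((a * k / p : ℕ) : _)) := by
        rw [← prod_Ico_id_eq_factorial, Ico_add_one_right_eq_Icc,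
          show a ^ (p - 1) = ∏ _k ∈ Icc 1 (p - 1), a by simp, ← prod_mul_distrib, cast_prod]
        exact prod_congr rfl fun k _ => by rw [← cast_mul, ← cast_add, mod_add_div]
    _ = _ := by
        rw [prod_add_mul_of_mul_self_eq_zero hc, ← cast_prod, prod_Icc_mul_mod_eq_factorial hp ha]
        push_cast
        rfl

theorem Nat.Prime.mod_three_ne_zero {q : ℕ} (hq : q.Prime) (h3 : 3 < q) : q % 3 ≠ 0 := fun h => by
  have := hq.eq_one_or_self_of_dvd 3 (dvd_of_mod_eq_zero h)
  omega

section ZModPrime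

variable {p : ℕ} [hp : Fact p.Prime]

theorem ZMod.natCast_ne_zero_of_pos_of_lt {k : ℕ} (hk0 : 0 < k) (hkp : k < p) :
    (k : ZMod p) ≠ 0 := by
  rw [Ne, ZMod.natCast_eq_zero_iff]
  exact fun h => absurd (Nat.le_of_dvd hk0 h) (by omega)

theorem ZMod.natCast_mul_fermatQuotient {a : ℕ} (ha : ¬p ∣ a) :
    ((a * fermatQuotient p a : ℕ) : ZMod p)
      = ∑ k ∈ Icc 1 (p - 1), ((a * k / p : ℕ) : ZMod p) * (k : ZMod p)⁻¹ := by
  have ha' : (a : ZMod p) ≠ 0 := by rwa [Ne, ZMod.natCast_eq_zero_iff]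
  have hcomplement : ∀ k ∈ Icc 1 (p - 1),
      ∏ j ∈ (Icc 1 (p - 1)).erase k, ((a * j % p : ℕ) : ZMod p) = -((a : ZMod p) * k)⁻¹ := by
    intro k hk
    have hk0 : (k : ZMod p) ≠ 0 := natCast_ne_zero_of_pos_of_lt (by simp at hk; omega)
      (by simp at hk; omega)
    have h := congrArg (Nat.cast : ℕ → ZMod p) (prod_erase_mul _ (fun j => a * j % p) hk)
    rw [prod_Icc_mul_mod_eq_factorial hp.out ha, ZMod.wilsons_lemma, Nat.cast_mul, Nat.cast_prod]
      at h
    simp only [ZMod.natCast_mod, Nat.cast_mul] at h ⊢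
    field_simp
    linear_combination h
  have hq := pow_sub_one_mul_factorial_modEq hp.out ha
  rw [pow_sub_one_eq_one_add_mul_fermatQuotient hp.out ha, add_mul, one_mul, mul_assoc] at hq
  have hq' := (ZMod.natCast_eq_natCast_iff _ _ _).mpr
    (ModEq.mul_left_cancel' hp.out.ne_zero (ModEq.add_left_cancel' _ hq))
  push_cast at hq'
  rw [ZMod.wilsons_lemma, sum_congr rfl fun k hk => congrArg _ (hcomplement k hk)] at hq'
  calc ((a * fermatQuotient p a : ℕ) : ZMod p) = -a * (fermatQuotient p a * -1) := by
        push_cast; ring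
    _ = _ := by
        rw [hq', mul_sum]
        exact sum_congr rfl fun k _ => by field_simp

theorem ZMod.sum_Icc_inv_reflect {t : ℕ} (ht : t < p) :
    ∑ k ∈ Icc (p - t) (p - 1), (k : ZMod p)⁻¹ = -∑ k ∈ Icc 1 t, (k : ZMod p)⁻¹ := by
  rw [← sum_neg_distrib]
  refine sum_nbij' (p - ·) (p - ·) ?_ ?_ ?_ ?_ fun k hk => ?_
  all_goals try (intro k hk; simp only [mem_Icc] at hk ⊢; omega)
  rw [← inv_neg, Nat.cast_sub (by simp at hk; omega), ZMod.natCast_self, zero_sub, neg_neg]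

theorem ZMod.sum_Icc_inv_eq_zero (hp2 : p ≠ 2) : ∑ k ∈ Icc 1 (p - 1), (k : ZMod p)⁻¹ = 0 := by
  have h := sum_Icc_inv_reflect (p := p) (t := p - 1) (by have := hp.out.pos; omega)
  rw [Nat.sub_sub_self hp.out.one_le] at h
  by_contra hne
  exact ZMod.ne_neg_self (hp.out.odd_of_ne_two hp2) hne h

theorem ZMod.sum_Icc_inv_sub_one_sub (hp2 : p ≠ 2) {n : ℕ} (hn : n < p) :
    ∑ k ∈ Icc 1 (p - 1 - n), (k : ZMod p)⁻¹ = ∑ k ∈ Icc 1 n, (k : ZMod p)⁻¹ := by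
  have h := sum_Ioc_consecutive (fun k => (k : ZMod p)⁻¹) (zero_le (p - 1 - n))
    (Nat.sub_le (p - 1) n)
  simp only [← Icc_add_one_left_eq_Ioc, zero_add] at h
  rw [show p - 1 - n + 1 = p - n by omega, sum_Icc_inv_reflect hn, sum_Icc_inv_eq_zero hp2] at h
  linear_combination h

theorem ZMod.sum_Icc_three_mul_div_mul_inv (hp5 : 5 ≤ p) :
    ∑ k ∈ Icc 1 (p - 1), ((3 * k / p : ℕ) : ZMod p) * (k : ZMod p)⁻¹
      = -2 * ∑ k ∈ Icc 1 (p / 3), (k : ZMod p)⁻¹ := by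
  have hp3 := hp.out.mod_three_ne_zero (by omega)
  have hIcc (n : ℕ) : Icc 1 n = Ioc 0 n := Icc_add_one_left_eq_Ioc 0 n
  set a := p / 3
  set b := p - 1 - a
  have hab : a ≤ b := by omega
  have hb : b ≤ p - 1 := by omega
  have htotal := sum_Icc_inv_eq_zero (p := p) (by omega)
  have hreflect := sum_Icc_inv_sub_one_sub (p := p) (by omega) (n := a) (by omega)
  rw [hIcc, ← sum_Ioc_consecutive _ (zero_le b) hb, ← sum_Ioc_consecutive _ (zero_le a) hab]
    at htotal
  rw [hIcc, hIcc, ← sum_Ioc_consecutive _ (zero_le a) hab] at hreflect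
  rw [hIcc, hIcc, ← sum_Ioc_consecutive _ (zero_le b) hb, ← sum_Ioc_consecutive _ (zero_le a) hab]
  have hdiv (m n c : ℕ) (h : ∀ k ∈ Ioc m n, 3 * k / p = c) :
      ∑ k ∈ Ioc m n, ((3 * k / p : ℕ) : ZMod p) * (k : ZMod p)⁻¹
        = c * ∑ k ∈ Ioc m n, (k : ZMod p)⁻¹ := by
    rw [mul_sum]
    exact sum_congr rfl fun k hk => by rw [h k hk]
  -- `b = ⌊2p/3⌋`, so `⌊3k/p⌋` is `0`, `1`, `2` on `(0, a]`, `(a, b]`, `(b, p - 1]`.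
  rw [hdiv 0 a 0 fun k hk => ?_, hdiv a b 1 fun k hk => ?_, hdiv b (p - 1) 2 fun k hk => ?_]
  · push_cast
    linear_combination 2 * htotal - hreflect
  all_goals
    rw [mem_Ioc] at hk
    exact Nat.div_eq_of_lt_le (by omega) (by omega)

theorem ZMod.natCast_factorial_three_mul_div {m k : ℕ} (hm : (3 * m + 1 : ZMod p) = 0)
    (hk : k < p) :
    (((3 * k)! / k ! ^ 3 : ℕ) : ZMod p)
      = (-27) ^ k * (m.choose k : ZMod p) * ((m + k).choose k) := by
  have hfac : (k ! : ZMod p) ≠ 0 := by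
    rw [Ne, ZMod.natCast_eq_zero_iff, hp.out.dvd_factorial]
    omega
  have h := cast_factorial_three_mul_div_mul_factorial_sq hm k
  push_cast at h
  exact mul_right_cancel₀ (pow_ne_zero 2 hfac) (by linear_combination h)

theorem ZMod.exists_three_mul_add_one_eq_zero (hp5 : 5 ≤ p) :
    ∃ m < p, (3 * m + 1 : ZMod p) = 0
      ∧ ∑ k ∈ Icc 1 m, (k : ZMod p)⁻¹ = ∑ k ∈ Icc 1 (p / 3), (k : ZMod p)⁻¹ := by
  have hp3 := hp.out.mod_three_ne_zero (by omega)
  have hzero (m : ℕ) (h : p ∣ 3 * m + 1) : (3 * m + 1 : ZMod p) = 0 := by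
    exact_mod_cast (ZMod.natCast_eq_zero_iff _ _).mpr h
  rcases (by omega : p % 3 = 1 ∨ p % 3 = 2) with h | h
  · exact ⟨p / 3, by omega, hzero _ ⟨1, by omega⟩, rfl⟩
  · exact ⟨p - 1 - p / 3, by omega, hzero _ ⟨2, by omega⟩,
      sum_Icc_inv_sub_one_sub (by omega) (by omega)⟩

end ZModPrime

theorem stmt_4 (p : ℕ) [Fact p.Prime] (hp5 : 5 ≤ p) :
    ∑ k ∈ Finset.Icc 1 (p - 1),
      ((((3 * k).factorial / (k.factorial) ^ 3 : ℕ) : ZMod p)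
        * ((27 : ZMod p)⁻¹) ^ k * ((k : ZMod p)⁻¹))
      = 3 * (((3 ^ (p - 1) - 1) / p : ℕ) : ZMod p) := by
  obtain ⟨m, hmp, hm, hHm⟩ := ZMod.exists_three_mul_add_one_eq_zero hp5
  have h3 : ¬p ∣ 3 := fun h => by have := Nat.le_of_dvd (by norm_num) h; omega
  have h27 : (27 : ZMod p) ≠ 0 := by
    rw [show (27 : ZMod p) = ((3 ^ 3 : ℕ) : ZMod p) by norm_num, Ne, ZMod.natCast_eq_zero_iff]
    exact fun h => h3 ((Fact.out : p.Prime).dvd_of_dvd_pow h)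
  have hterm : ∀ k ∈ Icc 1 (p - 1), (((3 * k)! / k ! ^ 3 : ℕ) : ZMod p) * 27⁻¹ ^ k * (k : ZMod p)⁻¹
      = (-1) ^ k * (m.choose k : ZMod p) * ((m + k).choose k) * (k : ZMod p)⁻¹ := fun k hk => by
    rw [ZMod.natCast_factorial_three_mul_div hm (by simp at hk; omega), neg_pow, inv_pow]
    field_simp
  have htrunc : ∑ k ∈ Icc 1 (p - 1), (-1) ^ k * (m.choose k : ZMod p) * ((m + k).choose k)
        * (k : ZMod p)⁻¹
      = ∑ k ∈ Icc 1 m, (-1) ^ k * (m.choose k : ZMod p) * ((m + k).choose k) * (k : ZMod p)⁻¹ := by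
    refine (sum_subset (Icc_subset_Icc_right (by omega)) fun k hk hkm => ?_).symm
    rw [choose_eq_zero_of_lt (by simp at hk hkm; omega)]
    simp
  rw [sum_congr rfl hterm, htrunc, sum_Icc_neg_one_pow_mul_choose_mul_add_choose_mul_inv
      fun k hk => ZMod.natCast_ne_zero_of_pos_of_lt (by simp at hk; omega) (by simp at hk; omega),
    hHm, ← ZMod.sum_Icc_three_mul_div_mul_inv hp5, ← ZMod.natCast_mul_fermatQuotient h3]
  push_cast
  rfl
end

section
/- Let p ≥ 5 be a prime and let i be an integer with 0 < i < p/3. Then ∑_{k=0}^{p-1} (3k)!/(k!^3) * 27^{-k} * 1/(k+i) ≡ 0 (mod p). -/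
/-!
Put `n = ⌊(p - 1) / 3⌋`, so that `p ∣ (3n + 1)(3n + 2)`. For `n < k < p` the multinomial
coefficient `(3k)! / k!³` is divisible by `p`. For `k ≤ n`, the congruence
`(3k + 1)(3k + 2) ≡ -9 (n - k)(n + k + 1)` turns `(3k)! / (k!³ 27ᵏ)` into
`(-1)ᵏ C(n, k) C(n + k, k)`. Since `C(n + k, k) / (k + i) = Q(k) / n!` with
`Q = ∏_{1 ≤ j ≤ n, j ≠ i} (X + j)` of degree `n - 1`, the sum is `(-1)ⁿ / n!` times the
`n`-th forward difference of `Q` at `0`, which vanishes.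
-/

open Finset Polynomial

theorem factorial_ne_zero_of_le {R : Type*} [Semiring R] {m N : ℕ}
    (hmN : m ≤ N) (hN : (N.factorial : R) ≠ 0) : (m.factorial : R) ≠ 0 :=
  ne_zero_of_dvd_ne_zero hN (Nat.cast_dvd_cast (Nat.factorial_dvd_factorial hmN))

theorem natCast_ne_zero_of_le_of_factorial_ne_zero {R : Type*} [Semiring R] {m N : ℕ}
    (hm : 0 < m) (hmN : m ≤ N) (hN : (N.factorial : R) ≠ 0) : (m : R) ≠ 0 :=
  ne_zero_of_dvd_ne_zero hN (Nat.cast_dvd_cast (Nat.dvd_factorial hm hmN))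

theorem Nat.factorial_three_mul_s5 (k : ℕ) :
    (3 * k).factorial = (3 * k).choose k * (2 * k).choose k * k.factorial ^ 3 := by
  have h3 := Nat.choose_mul_factorial_mul_factorial (show k ≤ 3 * k by omega)
  have h2 := Nat.choose_mul_factorial_mul_factorial (show k ≤ 2 * k by omega)
  rw [show 3 * k - k = 2 * k by omega] at h3
  rw [show 2 * k - k = k by omega] at h2
  rw [← h3, ← h2]
  ring

theorem Nat.factorial_three_mul_div_pow_three (k : ℕ) :
    (3 * k).factorial / k.factorial ^ 3 = (3 * k).choose k * (2 * k).choose k := by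
  rw [Nat.factorial_three_mul_s5, Nat.mul_div_cancel _ (by positivity)]

theorem Nat.Prime.dvd_factorial_three_mul_div_pow_three {p k : ℕ} (hp : p.Prime) (hkp : k < p)
    (hp3k : p ≤ 3 * k) : p ∣ (3 * k).factorial / k.factorial ^ 3 := by
  have hdvd : p ∣ (3 * k).factorial / k.factorial ^ 3 * k.factorial ^ 3 := by
    rw [Nat.factorial_three_mul_div_pow_three, ← Nat.factorial_three_mul_s5]
    exact hp.dvd_factorial.mpr hp3k
  refine (hp.dvd_mul.mp hdvd).resolve_right fun h => ?_
  exact absurd (hp.dvd_factorial.mp (hp.dvd_of_dvd_pow h)) (by omega)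

/-- Modulo `(3n+1)(3n+2)` one has `(3k+1)(3k+2) = -9 (n-k)(n+k+1)`, which drives the induction. -/
theorem factorial_three_mul_mul_factorial_sub {R : Type*} [CommRing R] {n : ℕ}
    (h : ((3 * n + 1) * (3 * n + 2) : R) = 0) {k : ℕ} (hk : k ≤ n) :
    ((3 * k).factorial * (n - k).factorial : R) = (-27) ^ k * (n + k).factorial * k.factorial := by
  induction k with
  | zero => simp
  | succ k ih =>
    have ih := ih (by omega)
    rw [show n - k = (n - (k + 1)) + 1 by omega, Nat.factorial_succ] at ih
    rw [show 3 * (k + 1) = 3 * k + 2 + 1 by ring, show n + (k + 1) = n + k + 1 by ring,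
      Nat.factorial_succ, Nat.factorial_succ, Nat.factorial_succ, Nat.factorial_succ,
      Nat.factorial_succ]
    push_cast [Nat.cast_sub hk] at ih ⊢
    linear_combination (-27 * ((n : R) + k + 1) * ((k : R) + 1)) * ih
      + (3 * ((k : R) + 1) * ((3 * k).factorial : R) * ((n - (k + 1)).factorial : R)) * h

theorem factorial_three_mul_div_pow_three_mul_inv_pow {F : Type*} [Field F] {n : ℕ}
    (h : ((3 * n + 1) * (3 * n + 2) : F) = 0) (hn : (n.factorial : F) ≠ 0) {k : ℕ} (hk : k ≤ n) :
    (((3 * k).factorial / k.factorial ^ 3 : ℕ) : F) * (27 : F)⁻¹ ^ k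
      = (-1) ^ k * (n.choose k : F) * ((n + k).choose k : F) := by
  have h27 : (27 : F) ≠ 0 := by
    -- if `3 = 0` then `h` reads `2 = 0`
    intro h27
    have h3 : (3 : F) = 0 := pow_eq_zero_iff (n := 3) (by norm_num) |>.mp (by linear_combination h27)
    have h1 : (1 : F) = 0 := by linear_combination (1 + 3 * (n : F) ^ 2 + 3 * n) * h3 - h
    exact one_ne_zero h1
  have hkf : (k.factorial : F) ≠ 0 := factorial_ne_zero_of_le hk hn
  have hnkf : ((n - k).factorial : F) ≠ 0 := factorial_ne_zero_of_le (Nat.sub_le n k) hn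
  have h3k := congrArg (Nat.cast (R := F)) (Nat.factorial_three_mul_s5 k)
  have hnk := congrArg (Nat.cast (R := F)) (Nat.add_choose_mul_factorial_mul_factorial n k)
  have hnc := congrArg (Nat.cast (R := F)) (Nat.choose_mul_factorial_mul_factorial hk)
  have key := factorial_three_mul_mul_factorial_sub h hk
  push_cast at h3k hnk hnc
  rw [Nat.factorial_three_mul_div_pow_three, inv_pow]
  field_simp
  refine mul_right_cancel₀ (mul_ne_zero (pow_ne_zero 3 hkf) hnkf) ?_
  rw [neg_pow, mul_comm ((-1 : F) ^ k)] at key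
  push_cast
  linear_combination key - ((n - k).factorial : F) * h3k
    - (27 : F) ^ k * (-1) ^ k * (k.factorial : F) ^ 2 * ((n + k).choose k : F) * hnc
    - (27 : F) ^ k * (-1) ^ k * (k.factorial : F) * hnk

theorem Polynomial.sum_range_neg_one_pow_mul_choose_mul_eval_eq_zero {R : Type*} [CommRing R]
    {P : R[X]} {n : ℕ} (hP : P.natDegree < n) :
    ∑ k ∈ range (n + 1), (-1) ^ k * n.choose k * P.eval (k : R) = 0 := by
  have hΔ := congrFun (fwdDiff_iter_eq_zero_of_degree_lt hP) 0
  simp only [fwdDiff_iter_eq_sum_shift, zero_add, nsmul_one, zsmul_eq_mul, Int.cast_mul,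
    Int.cast_pow, Int.cast_neg, Int.cast_one, Int.cast_natCast, Pi.zero_apply] at hΔ
  calc ∑ k ∈ range (n + 1), (-1) ^ k * n.choose k * P.eval (k : R)
      = (-1) ^ n * ∑ k ∈ range (n + 1), (-1) ^ (n - k) * n.choose k * P.eval (k : R) := by
        rw [mul_sum]
        refine sum_congr rfl fun k hk => ?_
        have hsign : ((-1) ^ k : R) = (-1) ^ n * (-1) ^ (n - k) := by
          rw [← pow_add, neg_one_pow_eq_pow_mod_two, neg_one_pow_eq_pow_mod_two (n + _)]
          have := mem_range.mp hk
          congr 1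
          omega
        rw [hsign]
        ring
    _ = 0 := by rw [hΔ, mul_zero]

theorem sum_range_neg_one_pow_mul_choose_mul_choose_mul_inv_eq_zero {F : Type*} [Field F]
    {n i : ℕ} (hi : 0 < i) (hin : i ≤ n) (h2n : ((2 * n).factorial : F) ≠ 0) :
    ∑ k ∈ range (n + 1), (-1) ^ k * (n.choose k : F) * ((n + k).choose k : F)
      * ((k : F) + i)⁻¹ = 0 := by
  set Q : F[X] := ∏ j ∈ (range n).erase (i - 1), (X + C ((j : F) + 1)) with hQ_def
  have hdeg : Q.natDegree < n := by
    refine (natDegree_prod_le _ _).trans_lt ?_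
    simp only [natDegree_X_add_C, sum_const, smul_eq_mul, mul_one]
    rw [card_erase_of_mem (mem_range.mpr (by omega)), card_range]
    omega
  have hnfac : (n.factorial : F) ≠ 0 := factorial_ne_zero_of_le (by omega) h2n
  have hterm : ∀ k ∈ range (n + 1), (-1) ^ k * (n.choose k : F) * ((n + k).choose k : F)
      * ((k : F) + i)⁻¹ = (n.factorial : F)⁻¹ * ((-1) ^ k * n.choose k * Q.eval (k : F)) := by
    intro k hk
    have hki : (k : F) + i ≠ 0 := by
      exact_mod_cast natCast_ne_zero_of_le_of_factorial_ne_zero (by omega)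
        (by have := mem_range.mp hk; omega) h2n
    have hQ : ((k : F) + i) * Q.eval (k : F) = n.factorial * ((n + k).choose k : F) := by
      have hprod := mul_prod_erase (range n) (fun j => (k : F) + ((j : F) + 1))
        (mem_range.mpr (show i - 1 < n by omega))
      have hasc := Nat.ascFactorial_eq_factorial_mul_choose k n
      rw [Nat.ascFactorial_eq_prod_range, add_comm k n, Nat.choose_symm_add] at hasc
      rw [hQ_def, eval_prod]
      simp only [eval_add, eval_X, eval_C]
      rw [Nat.cast_sub hi, Nat.cast_one, sub_add_cancel] at hprod
      rw [hprod, ← Nat.cast_mul, ← hasc, Nat.cast_prod]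
      exact prod_congr rfl fun j _ => by push_cast; ring
    field_simp
    linear_combination -(n.choose k : F) * hQ
  rw [sum_congr rfl hterm, ← mul_sum, sum_range_neg_one_pow_mul_choose_mul_eval_eq_zero hdeg,
    mul_zero]

theorem stmt_5_general (p : ℕ) [Fact p.Prime] (i : ℕ) (hi : 0 < i) (hip : 3 * i < p) :
    ∑ k ∈ Finset.range p,
      ((((3 * k).factorial / (k.factorial) ^ 3 : ℕ) : ZMod p)
        * ((27 : ZMod p)⁻¹) ^ k * (((k : ZMod p) + i)⁻¹)) = 0 := by
  have hp : p.Prime := Fact.out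
  set n := (p - 1) / 3
  have hpn : 3 * n + 1 = p ∨ 3 * n + 2 = p := by
    have : ¬ 3 ∣ p := fun h => by
      have := (Nat.prime_dvd_prime_iff_eq Nat.prime_three hp).mp h
      omega
    omega
  have hrel : ((3 * n + 1) * (3 * n + 2) : ZMod p) = 0 := by
    have : p ∣ (3 * n + 1) * (3 * n + 2) := by
      rcases hpn with h | h <;> simp [h]
    exact_mod_cast (ZMod.natCast_eq_zero_iff _ p).mpr this
  have h2n : ((2 * n).factorial : ZMod p) ≠ 0 := by
    rw [Ne, ZMod.natCast_eq_zero_iff, hp.dvd_factorial]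
    omega
  rw [← sum_subset (range_subset_range.mpr (show n + 1 ≤ p by omega)) fun k hk hkn => ?tail]
  case tail =>
    rw [mem_range, not_lt] at hkn
    rw [(ZMod.natCast_eq_zero_iff _ p).mpr
      (hp.dvd_factorial_three_mul_div_pow_three (mem_range.mp hk) (by omega)), zero_mul, zero_mul]
  rw [sum_congr rfl fun k hk => by
    rw [factorial_three_mul_div_pow_three_mul_inv_pow hrel (factorial_ne_zero_of_le (by omega) h2n)
      (Nat.lt_succ_iff.mp (mem_range.mp hk))]]
  exact sum_range_neg_one_pow_mul_choose_mul_choose_mul_inv_eq_zero hi (by omega) h2n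

theorem stmt_5 (p : ℕ) [Fact p.Prime] (hp5 : 5 ≤ p) (i : ℕ) (hi : 0 < i) (hip : 3 * i < p) :
    ∑ k ∈ Finset.range p,
      ((((3 * k).factorial / (k.factorial) ^ 3 : ℕ) : ZMod p)
        * ((27 : ZMod p)⁻¹) ^ k * (((k : ZMod p) + i)⁻¹)) = 0 :=
  stmt_5_general p i hi hip
end

section
/- Let p be a prime and a > b ≥ 0 integers and 0 < j < p. Then C(a*p, b*p + j) ≡ (a-b)*C(a,b)*C(p,j) (mod p^2). -/
/-!
Absorption gives `(bp + j) C((a+1)p, bp + j) = (a+1) p C(ap + p - 1, bp + j - 1)`, and by Lucas'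
theorem the last binomial is `C(p-1, j-1) C(a, b)` mod `p`. Together with `j C(p, j) = p C(p-1, j-1)`
and `p ∣ C(p, j)` this shows that `C((a+1)p, bp + j)` and `(a+1) C(a, b) C(p, j)` agree mod `p²`
after multiplication by `bp + j`, which is prime to `p`. Finally `a C(a-1, b) = (a - b) C(a, b)`.
-/

theorem Choose.choose_mul_add_modEq {p : ℕ} [Fact p.Prime] (m n : ℕ) {r s : ℕ} (hr : r < p)
    (hs : s < p) : ((m * p + r).choose (n * p + s) : ℤ) ≡ r.choose s * m.choose n [ZMOD p] := by
  have hp := (Fact.out : p.Prime).pos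
  simpa [Nat.mul_add_mod_self_right, Nat.mod_eq_of_lt, Nat.add_mul_div_right, Nat.div_eq_of_lt,
    hr, hs, hp, add_comm] using
    (Choose.choose_modEq_choose_mod_mul_choose_div (n := m * p + r) (k := n * p + s) (p := p))

theorem Nat.Prime.choose_succ_mul_modEq_sq {p : ℕ} (hp : p.Prime) (a b : ℕ) {j : ℕ} (hj0 : 0 < j)
    (hjp : j < p) :
    (((a + 1) * p).choose (b * p + j) : ℤ) ≡ (a + 1) * a.choose b * p.choose j [ZMOD p ^ 2] := by
  have := Fact.mk hp
  set N := ((a + 1) * p).choose (b * p + j)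
  set M := (a * p + (p - 1)).choose (b * p + (j - 1))
  have absorb_N : (b * p + j) * N = (a + 1) * p * M := by
    have h := Nat.add_one_mul_choose_eq (a * p + (p - 1)) (b * p + (j - 1))
    rw [show a * p + (p - 1) + 1 = (a + 1) * p by grind,
      show b * p + (j - 1) + 1 = b * p + j by omega] at h
    rw [h, mul_comm]
  have absorb_p : j * p.choose j = p * (p - 1).choose (j - 1) := by
    have h := Nat.add_one_mul_choose_eq (p - 1) (j - 1)
    rwa [Nat.sub_add_cancel hp.one_le, Nat.sub_add_cancel hj0, mul_comm _ j, eq_comm] at h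
  have lucas_M : (M : ℤ) ≡ (p - 1).choose (j - 1) * a.choose b [ZMOD p] :=
    Choose.choose_mul_add_modEq a b (Nat.sub_lt hp.pos one_pos) (by omega)
  have hp_dvd : (p : ℤ) ∣ p.choose j := by exact_mod_cast hp.dvd_choose_self hj0.ne' hjp
  have hcop : IsCoprime ((p : ℤ) ^ 2) (b * p + j) := by
    have h : p.Coprime (b * p + j) := by
      rw [hp.coprime_iff_not_dvd, Nat.dvd_add_right (dvd_mul_left p b)]
      exact Nat.not_dvd_of_pos_of_lt hj0 hjp
    exact_mod_cast (Nat.isCoprime_iff_coprime.2 h).pow_left (m := 2)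
  refine Int.modEq_iff_dvd.2 (hcop.dvd_of_dvd_mul_left ?_)
  have key : ((b : ℤ) * p + j) * ((a + 1) * a.choose b * p.choose j - N)
      = (a + 1) * a.choose b * b * (p * p.choose j)
        + (a + 1) * p * ((p - 1).choose (j - 1) * a.choose b - M) := by
    have hN : ((b * p + j : ℕ) : ℤ) * N = (a + 1) * p * M := by exact_mod_cast absorb_N
    have hj : (j : ℤ) * p.choose j = p * (p - 1).choose (j - 1) := by exact_mod_cast absorb_p
    push_cast at hN
    linear_combination (a + 1) * a.choose b * hj - hN
  rw [key, sq]
  exact dvd_add (dvd_mul_of_dvd_right (mul_dvd_mul_left _ hp_dvd) _)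
    (mul_dvd_mul (dvd_mul_left _ _) lucas_M.dvd)

theorem stmt_7 (p : ℕ) (hp : p.Prime) (a b j : ℕ) (hab : b < a) (hj0 : 0 < j) (hjp : j < p) :
    (((a * p).choose (b * p + j) : ℤ))
      ≡ ((a : ℤ) - b) * (a.choose b) * (p.choose j) [ZMOD ((p : ℤ) ^ 2)] := by
  obtain ⟨c, rfl⟩ : ∃ c, a = c + 1 := ⟨a - 1, by omega⟩
  have hr : ((c : ℤ) + 1) * c.choose b = ((c + 1 : ℕ) - b : ℤ) * (c + 1).choose b := by
    have h : ((c.choose b * (c + 1) : ℕ) : ℤ) = ((c + 1).choose b * (c + 1 - b) : ℕ) :=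
      congrArg _ (Nat.choose_mul_succ_eq c b)
    push_cast [Nat.cast_sub hab.le] at h ⊢
    linear_combination h
  simpa [hr] using hp.choose_succ_mul_modEq_sq c b hj0 hjp
end

section
/- Let p be a prime, a > b ≥ 0 integers, and 0 < j < p with b*p ≥ j. Then C(a*p, b*p - j) ≡ b*C(a,b)*C(p,j) (mod p^2). -/
/-!
Vandermonde's identity `C(p(a+1), m) = ∑ C(p, i) C(pa, m - i)` gives an induction on `a`.
Write `m = pq + r` with `0 < r < p`. Modulo `p²` only three terms survive: `i = 0` and `i = p`
(handled by induction), and `i = r`, where `p ∣ C(p, r)` and Lucas' theorem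
`C(pa, pq) ≡ C(a, q) (mod p)` combine. Every other term with `0 < i < p` is a product of two
multiples of `p`: `C(p, i)`, and `C(pa, m - i)` since `p ∤ m - i`.
-/

open Finset

namespace Nat

theorem ModEq.mul_left_of_dvd {n x y c : ℕ} (h : x ≡ y [MOD n]) (hc : n ∣ c) :
    c * x ≡ c * y [MOD n ^ 2] :=
  (h.mul_left' c).of_dvd (by rw [sq]; exact mul_dvd_mul_right hc n)

theorem Prime.dvd_choose_prime_mul {p : ℕ} (hp : p.Prime) (a : ℕ) {k : ℕ} (hk : ¬p ∣ k) :
    p ∣ (p * a).choose k := by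
  have : Fact p.Prime := ⟨hp⟩
  have hlucas := Choose.choose_modEq_choose_mod_mul_choose_div_nat (n := p * a) (k := k) (p := p)
  rwa [Nat.mul_mod_right, Nat.choose_eq_zero_of_lt (Nat.pos_of_ne_zero (mt dvd_of_mod_eq_zero hk)),
    zero_mul, Nat.modEq_zero_iff_dvd] at hlucas

theorem Prime.choose_mul_choose_prime_mul_modEq {p r a q i k : ℕ} (hp : p.Prime) (hr0 : r ≠ 0)
    (hrp : r < p)
    (ih : ∀ q, (p * a).choose (p * q + r) ≡ (q + 1) * a.choose (q + 1) * p.choose r [MOD p ^ 2])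
    (hik : i + k = p * q + r) :
    p.choose i * (p * a).choose k ≡
      (if i = 0 then (q + 1) * a.choose (q + 1) * p.choose r else 0) +
      (if i = r then p.choose r * a.choose q else 0) +
      (if i = p then q * a.choose q * p.choose r else 0) [MOD p ^ 2] := by
  have : Fact p.Prime := ⟨hp⟩
  rcases Nat.eq_zero_or_pos i with rfl | hi0
  · obtain rfl : k = p * q + r := by omega
    rw [if_pos rfl, if_neg (Ne.symm hr0), if_neg (Ne.symm hp.ne_zero), Nat.choose_zero_right]
    simpa using ih q
  rcases lt_trichotomy i p with hip | rfl | hpi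
  · by_cases hir : i = r
    · subst hir
      obtain rfl : k = p * q := by omega
      rw [if_neg hr0, if_pos rfl, if_neg hrp.ne]
      simpa using (Choose.choose_mul_mul_modEq_choose_nat (p := p) (a := a) (b := q)).mul_left_of_dvd
        (hp.dvd_choose_self hr0 hrp)
    · have hk : ¬p ∣ k := by
        rintro ⟨t, rfl⟩
        have hmod := congrArg (· % p) hik
        simp only [Nat.add_mul_mod_self_left, Nat.mul_add_mod_self_left,
          Nat.mod_eq_of_lt hip, Nat.mod_eq_of_lt hrp] at hmod
        exact hir hmod
      rw [if_neg hi0.ne', if_neg hir, if_neg hip.ne, Nat.modEq_zero_iff_dvd, sq]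
      exact mul_dvd_mul (hp.dvd_choose_self hi0.ne' hip) (hp.dvd_choose_prime_mul a hk)
  · cases q with
    | zero => omega
    | succ q =>
      obtain rfl : k = i * q + r := by rw [mul_add_one] at hik; omega
      rw [if_neg hp.ne_zero, if_neg hrp.ne', if_pos rfl, Nat.choose_self]
      simpa using ih q
  · rw [if_neg hi0.ne', if_neg (by omega), if_neg hpi.ne', Nat.choose_eq_zero_of_lt hpi, zero_mul]
    rfl

theorem Prime.choose_prime_mul_add_modEq {p r : ℕ} (hp : p.Prime) (hr0 : r ≠ 0) (hrp : r < p)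
    (a q : ℕ) :
    (p * a).choose (p * q + r) ≡ (q + 1) * a.choose (q + 1) * p.choose r [MOD p ^ 2] := by
  induction a generalizing q with
  | zero => simp [Nat.choose_eq_zero_of_lt (by omega : 0 < p * q + r), Nat.ModEq.refl]
  | succ a ih =>
    have hsum : ∑ ik ∈ antidiagonal (p * q + r),
        ((if ik.1 = 0 then (q + 1) * a.choose (q + 1) * p.choose r else 0) +
          (if ik.1 = r then p.choose r * a.choose q else 0) +
          (if ik.1 = p then q * a.choose q * p.choose r else 0)) =
        (q + 1) * a.choose (q + 1) * p.choose r + p.choose r * a.choose q +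
          q * a.choose q * p.choose r := by
      rw [Nat.sum_antidiagonal_eq_sum_range_succ_mk]
      simp only [sum_add_distrib, sum_ite_eq', mem_range]
      rw [if_pos (by omega), if_pos (by omega)]
      split_ifs with hp_mem
      · rfl
      · obtain rfl : q = 0 := by
          by_contra hq
          exact hp_mem (by nlinarith [Nat.pos_of_ne_zero hq])
        simp
    calc (p * (a + 1)).choose (p * q + r)
        = ∑ ik ∈ antidiagonal (p * q + r), p.choose ik.1 * (p * a).choose ik.2 := by
          rw [mul_add_one, add_comm, Nat.add_choose_eq]
      _ ≡ _ [MOD p ^ 2] := Nat.ModEq.sum fun ik hik =>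
          hp.choose_mul_choose_prime_mul_modEq hr0 hrp ih (mem_antidiagonal.mp hik)
      _ = (q + 1) * (a + 1).choose (q + 1) * p.choose r := by
          rw [hsum, Nat.choose_succ_succ']; ring

end Nat

theorem stmt_8_general (p : ℕ) (hp : p.Prime) (a b j : ℕ) (hj0 : 0 < j) (hjp : j < p)
    (hbp : j ≤ b * p) :
    (((a * p).choose (b * p - j) : ℤ))
      ≡ (b : ℤ) * (a.choose b) * (p.choose j) [ZMOD ((p : ℤ) ^ 2)] := by
  obtain ⟨q, rfl⟩ : ∃ q, b = q + 1 :=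
    Nat.exists_eq_add_one.mpr (Nat.pos_of_ne_zero (by rintro rfl; omega))
  have hm : (q + 1) * p - j = p * q + (p - j) := by
    rw [add_one_mul, mul_comm, Nat.add_sub_assoc hjp.le]
  have h := hp.choose_prime_mul_add_modEq (by omega : p - j ≠ 0) (Nat.sub_lt hp.pos hj0) a q
  rw [Nat.choose_symm hjp.le, ← hm, mul_comm p a] at h
  exact_mod_cast (Int.natCast_modEq_iff).mpr h

theorem stmt_8 (p : ℕ) (hp : p.Prime) (a b j : ℕ) (hab : b < a) (hj0 : 0 < j) (hjp : j < p)
    (hbp : j ≤ b * p) :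
    (((a * p).choose (b * p - j) : ℤ))
      ≡ (b : ℤ) * (a.choose b) * (p.choose j) [ZMOD ((p : ℤ) ^ 2)] :=
  stmt_8_general p hp a b j hj0 hjp hbp
end

section
/- Let p ≥ 5 be a prime, and let m, n ≥ 0 and 0 ≤ r < p be integers. Then C(p*(n+m)+r, p*m+r) ≡ C(n+m,m) * (1 + n*(C(p+r,r) - 1)) (mod p^2). -/
/-!
Put `δ = C(p + r, r) - 1`. Expanding `(p X + 1)(p X + 2)⋯(p X + r)` to first order in `p` shows
that `r! C(p X + r, r) ≡ r! + p X e` modulo `p ^ 2` for some `e` independent of `X`; since `r!` is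
a unit, `C(p X + r, r) ≡ 1 + X δ` and `δ ^ 2 ≡ 0`. Combined with the exact identity
`C(N + r, K + r) C(K + r, r) = C(N + r, r) C(N, K)` and `C(p a, p b) ≡ C(a, b)` this gives
`C(p(n + m) + r, p m + r) (1 + m δ) ≡ C(n + m, m) (1 + (n + m) δ)`, and multiplying by
`1 - m δ` proves the congruence.
-/

open scoped Nat

theorem Nat.Prime.dvd_choose_mul {p : ℕ} (hp : p.Prime) (a : ℕ) {k : ℕ} (hk : ¬p ∣ k) :
    p ∣ (p * a).choose k := by
  have : Fact p.Prime := ⟨hp⟩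
  have hk0 : 0 < k % p := Nat.pos_of_ne_zero fun h ↦ hk (Nat.dvd_of_mod_eq_zero h)
  have h := Choose.choose_modEq_choose_mod_mul_choose_div_nat (p := p) (n := p * a) (k := k)
  rwa [Nat.mul_mod_right, Nat.choose_eq_zero_of_lt hk0, zero_mul, Nat.modEq_zero_iff_dvd] at h

theorem Nat.Prime.sq_dvd_choose_mul_mul_choose {p : ℕ} (hp : p.Prime) (a : ℕ) {i j : ℕ}
    (hij : p ∣ i + j) (hi : ¬p ∣ i) : p ^ 2 ∣ (p * a).choose i * p.choose j := by
  have hj : ¬p ∣ j := fun hj ↦ hi <| (Nat.dvd_add_left hj).mp hij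
  rcases lt_or_gt_of_ne (show j ≠ p by rintro rfl; exact hj dvd_rfl) with hjp | hjp
  · have hj0 : j ≠ 0 := by rintro rfl; exact hj (dvd_zero p)
    rw [sq]
    exact Nat.mul_dvd_mul (hp.dvd_choose_mul a hi) (hp.dvd_choose_self hj0 hjp)
  · simp [Nat.choose_eq_zero_of_lt hjp]

/-- In Vandermonde's expansion of `C(p a + p, p b + p)` every term other than those at `p b` and
`p b + p` is divisible by `p ^ 2`. -/
theorem Nat.Prime.choose_mul_succ_succ {p : ℕ} (hp : p.Prime) (a b : ℕ) :
    ((p * (a + 1)).choose (p * (b + 1)) : ZMod (p ^ 2)) =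
      (p * a).choose (p * (b + 1)) + (p * a).choose (p * b) := by
  have hpos := hp.pos
  rw [mul_add_one, Nat.add_choose_eq, Nat.cast_sum,
    Finset.sum_eq_add_of_mem (p * (b + 1), 0) (p * b, p) (by simp) (by simp; ring)
      (by simp; omega)]
  · simp
  rintro ⟨i, j⟩ hij hne
  rw [Finset.HasAntidiagonal.mem_antidiagonal] at hij
  simp only at hij ⊢
  by_cases hi : p ∣ i
  · obtain ⟨c, rfl⟩ := hi
    obtain ⟨d, rfl⟩ : p ∣ j :=
      (Nat.dvd_add_right (dvd_mul_right p c)).mp (hij ▸ dvd_mul_right _ _)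
    have hcd : c + d = b + 1 := Nat.eq_of_mul_eq_mul_left hpos (by rw [mul_add, hij])
    have hd : 1 < d := by
      rcases hne with ⟨h0, h1⟩
      by_contra!
      interval_cases d
      · exact h0 (by simp [← hcd])
      · exact h1 (by simp [show c = b by omega])
    simp [Nat.choose_eq_zero_of_lt (lt_mul_of_one_lt_right hpos hd)]
  · rw [ZMod.natCast_eq_zero_iff]
    exact hp.sq_dvd_choose_mul_mul_choose a (hij ▸ dvd_mul_right p _) hi

theorem Nat.Prime.choose_mul_mul {p : ℕ} (hp : p.Prime) (a b : ℕ) :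
    ((p * a).choose (p * b) : ZMod (p ^ 2)) = a.choose b := by
  induction a generalizing b with
  | zero =>
    rcases b with _ | b
    · simp
    · simp [Nat.choose_eq_zero_of_lt (Nat.mul_pos hp.pos b.succ_pos)]
  | succ a ih =>
    cases b with
    | zero => simp
    | succ b => rw [hp.choose_mul_succ_succ, ih, ih, Nat.choose_succ_succ', Nat.cast_add, add_comm]

theorem exists_cast_descFactorial_mul_add {R : Type*} [CommRing R] {p : ℕ} (hp : (p : R) ^ 2 = 0)
    (r : ℕ) : ∃ e : R, ∀ X : ℕ, ((p * X + r).descFactorial r : R) = r ! + p * X * e := by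
  induction r with
  | zero => exact ⟨0, by simp⟩
  | succ r ih =>
    obtain ⟨e, he⟩ := ih
    refine ⟨(r + 1) * e + r !, fun X ↦ ?_⟩
    rw [← add_assoc, Nat.succ_descFactorial_succ, Nat.cast_mul, he X, Nat.factorial_succ]
    push_cast
    linear_combination (X ^ 2 * e) * hp

section SquareZero

variable {R : Type*} [CommRing R] {p r : ℕ} (hp : (p : R) ^ 2 = 0) (hr : IsUnit (r ! : R))
include hp hr

theorem cast_choose_mul_add_of_sq_eq_zero (X : ℕ) :
    ((p * X + r).choose r : R) = 1 + X * ((p + r).choose r - 1) := by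
  obtain ⟨e, he⟩ := exists_cast_descFactorial_mul_add hp r
  have key (Y : ℕ) : (r ! : R) * (p * Y + r).choose r = r ! + p * Y * e := by
    rw [← he, ← Nat.cast_mul, Nat.descFactorial_eq_factorial_mul_choose]
  have h1 := key 1
  simp only [mul_one, Nat.cast_one] at h1
  refine hr.mul_left_cancel ?_
  rw [key X]
  linear_combination -(X : R) * h1

theorem sq_cast_choose_add_sub_one_of_sq_eq_zero : ((p + r).choose r - 1 : R) ^ 2 = 0 := by
  obtain ⟨e, he⟩ := exists_cast_descFactorial_mul_add hp r
  have h : (r ! : R) * ((p + r).choose r - 1) = p * e := by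
    have := he 1
    rw [mul_one, Nat.descFactorial_eq_factorial_mul_choose] at this
    push_cast at this
    linear_combination this
  refine (hr.pow 2).mul_left_cancel ?_
  linear_combination ((r ! : R) * ((p + r).choose r - 1) + p * e) * h + e ^ 2 * hp

end SquareZero

theorem Nat.add_choose_add_mul_add_choose (n k r : ℕ) :
    (n + r).choose (k + r) * (k + r).choose r = (n + r).choose r * n.choose k := by
  simpa using Nat.choose_mul (n := n + r) (Nat.le_add_left r k)

theorem Nat.Prime.isUnit_factorial_zmod_pow {p r : ℕ} (hp : p.Prime) (hr : r < p) (k : ℕ) :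
    IsUnit (r ! : ZMod (p ^ k)) := by
  rw [ZMod.isUnit_iff_coprime]
  exact Nat.Coprime.pow_right k (hp.coprime_iff_not_dvd.mpr (by rw [hp.dvd_factorial]; omega)).symm

theorem stmt_9_general (p : ℕ) (hp : p.Prime) (m n r : ℕ) (hr : r < p) :
    (((p * (n + m) + r).choose (p * m + r) : ℤ))
      ≡ ((n + m).choose m : ℤ) * (1 + (n : ℤ) * (((p + r).choose r : ℤ) - 1))
        [ZMOD ((p : ℤ) ^ 2)] := by
  rw [show (p : ℤ) ^ 2 = (p ^ 2 : ℕ) by push_cast; rfl, ← ZMod.intCast_eq_intCast_iff]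
  push_cast
  have hp2 : (p : ZMod (p ^ 2)) ^ 2 = 0 := by exact_mod_cast ZMod.natCast_self (p ^ 2)
  have hfac := hp.isUnit_factorial_zmod_pow hr 2
  have hid := congrArg (Nat.cast : ℕ → ZMod (p ^ 2))
    (Nat.add_choose_add_mul_add_choose (p * (n + m)) (p * m) r)
  simp only [Nat.cast_mul] at hid
  rw [hp.choose_mul_mul, cast_choose_mul_add_of_sq_eq_zero hp2 hfac,
    cast_choose_mul_add_of_sq_eq_zero hp2 hfac] at hid
  push_cast at hid
  have hδ := sq_cast_choose_add_sub_one_of_sq_eq_zero hp2 hfac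
  set δ : ZMod (p ^ 2) := ((p + r).choose r : ZMod (p ^ 2)) - 1
  set L : ZMod (p ^ 2) := ((p * (n + m) + r).choose (p * m + r) : ZMod (p ^ 2))
  set C : ZMod (p ^ 2) := ((n + m).choose m : ZMod (p ^ 2))
  linear_combination (1 - m * δ) * hid + (L * m ^ 2 - C * m * (n + m)) * hδ

theorem stmt_9 (p : ℕ) (hp : p.Prime) (hp5 : 5 ≤ p) (m n r : ℕ) (hr : r < p) :
    (((p * (n + m) + r).choose (p * m + r) : ℤ))
      ≡ ((n + m).choose m : ℤ) * (1 + (n : ℤ) * (((p + r).choose r : ℤ) - 1))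
        [ZMOD ((p : ℤ) ^ 2)] :=
  stmt_9_general p hp m n r hr
end

section
/- Let p ≥ 5 be a prime, and let m ≥ 0 and 0 ≤ r < p be integers. Then C(2pm+2r, pm+r) ≡ C(2m,m) * (C(2r,r) + 2m*C(p+2r,r) - 2m*C(2r,r)) (mod p^2). -/
/-!
Write `(1 + X)^p = 1 + X^p + H`. Every coefficient of `H` is divisible by `p`, so over
`ZMod (p^2)` we have `H^2 = 0` and hence
`(1 + X)^(2pm + 2r) = ((1 + X^p)^(2m) + 2m H (1 + X^p)^(2m - 1)) (1 + X)^(2r)`.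
The polynomials `(1 + X)^(2r)` and `H (1 + X)^(2r)` have degree `< 2p + r`, so the coefficient of
`X^(pm + r)` in their product with a polynomial in `X^p` only involves their coefficients of
`X^r` and `X^(p + r)`.
For `H (1 + X)^(2r) = (1 + X)^(p + 2r) - (1 + X)^(2r) - X^p (1 + X)^(2r)` both of these equal
`C(p + 2r, r) - C(2r, r)`.
-/

open Polynomial

lemma add_pow_of_sq_eq_zero {R : Type*} [CommRing R] (a e : R) (he : e ^ 2 = 0) (n : ℕ) :
    (a + e) ^ n = a ^ n + n * a ^ (n - 1) * e := by
  simpa [derivative_X_pow, mul_right_comm] using eval_add_of_sq_eq_zero (X ^ n) a e he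

namespace Polynomial

noncomputable def binomialDefect (R : Type*) [CommRing R] (p : ℕ) : R[X] :=
  (1 + X) ^ p - 1 - X ^ p

variable {R : Type*} [CommRing R]

lemma one_add_X_pow_eq (p : ℕ) : (1 + X : R[X]) ^ p = 1 + X ^ p + binomialDefect R p := by
  rw [binomialDefect]
  ring

lemma C_dvd_binomialDefect {p : ℕ} (hp : p.Prime) : C (p : ℤ) ∣ binomialDefect ℤ p := by
  have := Fact.mk hp
  rw [C_dvd_iff_dvd_coeff]
  intro i
  rw [← ZMod.intCast_zmod_eq_zero_iff_dvd, ← eq_intCast (Int.castRingHom _), ← coeff_map]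
  simp [binomialDefect, add_pow_char]

lemma binomialDefect_sq_eq_zero {p : ℕ} (hp : p.Prime) (hR : (p : R) ^ 2 = 0) :
    binomialDefect R p ^ 2 = 0 := by
  obtain ⟨G, hG⟩ := C_dvd_binomialDefect hp
  have hmap := congrArg (map (Int.castRingHom R)) hG
  simp only [binomialDefect, Polynomial.map_sub, Polynomial.map_pow, Polynomial.map_add,
    Polynomial.map_one, map_X, Polynomial.map_mul, map_natCast] at hmap
  rw [binomialDefect, hmap, mul_pow, Polynomial.map_natCast, ← C_eq_natCast, ← C_pow, hR, C_0,
    zero_mul]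

lemma natDegree_binomialDefect_le (p : ℕ) : (binomialDefect R p).natDegree ≤ p - 1 := by
  rw [natDegree_le_iff_coeff_eq_zero]
  intro N hN
  rcases Nat.lt_or_ge p N with h | h
  · simp [binomialDefect, coeff_one_add_X_pow, coeff_one, coeff_X_pow,
      Nat.choose_eq_zero_of_lt h, h.ne', Nat.ne_zero_of_lt h]
  · obtain rfl : N = p := by omega
    simp [binomialDefect, coeff_one_add_X_pow, coeff_one, coeff_X_pow,
      Nat.pos_iff_ne_zero.mp (by omega : 0 < N)]

lemma coeff_binomialDefect_mul_one_add_X_pow (p n k : ℕ) :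
    (binomialDefect R p * (1 + X) ^ n).coeff k
      = (p + n).choose k - n.choose k - if p ≤ k then (n.choose (k - p) : R) else 0 := by
  rw [binomialDefect, show ((1 + X) ^ p - 1 - X ^ p) * (1 + X) ^ n
      = ((1 + X) ^ (p + n) - (1 + X) ^ n - X ^ p * (1 + X) ^ n : R[X]) by ring]
  simp only [coeff_sub, coeff_X_pow_mul', coeff_one_add_X_pow]

lemma coeff_mul_expand_of_natDegree_lt {p r : ℕ} (hr : r < p) {B : R[X]}
    (hB : B.natDegree < 2 * p + r) (Q : R[X]) (m : ℕ) :
    (B * expand R p Q).coeff (p * (m + 1) + r)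
      = B.coeff r * Q.coeff (m + 1) + B.coeff (p + r) * Q.coeff m := by
  have hp : 0 < p := by omega
  rw [coeff_mul, Finset.sum_eq_add (r, p * (m + 1)) (p + r, p * m)]
  · simp only [coeff_expand hp, dvd_mul_right, if_true, Nat.mul_div_cancel_left _ hp]
  · simp only [ne_eq, Prod.mk.injEq]
    omega
  · rintro ⟨i, j⟩ hij ⟨hne₁, hne₂⟩
    rw [Finset.HasAntidiagonal.mem_antidiagonal] at hij
    rw [coeff_expand hp]
    split_ifs with hj
    · obtain ⟨t, rfl⟩ := hj
      obtain ht | rfl | rfl | ht : t + 1 ≤ m ∨ t = m ∨ t = m + 1 ∨ m + 2 ≤ t := by omega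
      · have : p * (t + 1) ≤ p * m := Nat.mul_le_mul_left p ht
        rw [mul_add] at this hij
        rw [coeff_eq_zero_of_natDegree_lt (by omega), zero_mul]
      · rw [mul_add, mul_one] at hij
        obtain rfl : i = p + r := by omega
        exact absurd rfl hne₂
      · obtain rfl : i = r := by omega
        exact absurd rfl hne₁
      · have : p * (m + 2) ≤ p * t := Nat.mul_le_mul_left p ht
        rw [mul_add] at this hij
        omega
    · rw [mul_zero]
  all_goals
    refine fun h => (h ?_).elim
    rw [Finset.HasAntidiagonal.mem_antidiagonal]
    ring

theorem cast_choose_eq_of_binomialDefect_sq_eq_zero {p r : ℕ} (hr : r < p)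
    (hH : binomialDefect R p ^ 2 = 0) (m : ℕ) :
    ((2 * p * m + 2 * r).choose (p * m + r) : R)
      = (2 * m).choose m * ((2 * r).choose r + 2 * m * (p + 2 * r).choose r
          - 2 * m * (2 * r).choose r) := by
  cases m with
  | zero => simp
  | succ m =>
  set H := binomialDefect R p
  have hsplit : (1 + X : R[X]) ^ (2 * p * (m + 1) + 2 * r)
      = (1 + X) ^ (2 * r) * expand R p ((1 + X) ^ (2 * m + 2))
        + ((2 * m + 2 : ℕ) : R[X])
          * (H * (1 + X) ^ (2 * r) * expand R p ((1 + X) ^ (2 * m + 1))) := by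
    rw [show 2 * p * (m + 1) + 2 * r = p * (2 * m + 2) + 2 * r by ring, pow_add, pow_mul,
      one_add_X_pow_eq, add_pow_of_sq_eq_zero _ _ hH]
    simp only [map_pow, map_add, map_one, expand_X]
    push_cast
    ring
  have hdeg : ((1 + X : R[X]) ^ (2 * r)).natDegree ≤ 2 * r := by compute_degree
  have hdeg₀ : ((1 + X : R[X]) ^ (2 * r)).natDegree < 2 * p + r := by omega
  have hdeg₁ : (H * (1 + X) ^ (2 * r)).natDegree < 2 * p + r :=
    (natDegree_mul_le.trans (add_le_add (natDegree_binomialDefect_le p) hdeg)).trans_lt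
      (by omega)
  have hlow : (H * (1 + X) ^ (2 * r)).coeff r
      = ((p + 2 * r).choose r : R) - (2 * r).choose r := by
    rw [coeff_binomialDefect_mul_one_add_X_pow, if_neg (by omega), sub_zero]
  have hhigh : (H * (1 + X) ^ (2 * r)).coeff (p + r)
      = ((p + 2 * r).choose r : R) - (2 * r).choose r := by
    rw [coeff_binomialDefect_mul_one_add_X_pow, if_pos (by omega), Nat.add_sub_cancel_left,
      Nat.choose_eq_zero_of_lt (by omega : 2 * r < p + r), show p + 2 * r = (p + r) + r by ring,
      Nat.choose_symm_add]
    simp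
  have hcoeff := congrArg (coeff · (p * (m + 1) + r)) hsplit
  simp only [coeff_add, coeff_natCast_mul, coeff_one_add_X_pow,
    coeff_mul_expand_of_natDegree_lt hr hdeg₀, coeff_mul_expand_of_natDegree_lt hr hdeg₁,
    hlow, hhigh, Nat.choose_eq_zero_of_lt (by omega : 2 * r < p + r)] at hcoeff
  rw [hcoeff, show 2 * (m + 1) = 2 * m + 1 + 1 by ring, Nat.choose_succ_succ (2 * m + 1) m]
  push_cast
  ring

end Polynomial

theorem stmt_10_general (p : ℕ) (hp : p.Prime) (m r : ℕ) (hr : r < p) :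
    (((2 * p * m + 2 * r).choose (p * m + r) : ℤ))
      ≡ ((2 * m).choose m : ℤ)
        * (((2 * r).choose r : ℤ) + 2 * m * ((p + 2 * r).choose r : ℤ)
            - 2 * m * ((2 * r).choose r : ℤ)) [ZMOD ((p : ℤ) ^ 2)] := by
  have hp_sq : (p : ZMod (p ^ 2)) ^ 2 = 0 := by rw [← Nat.cast_pow, ZMod.natCast_self]
  have h := cast_choose_eq_of_binomialDefect_sq_eq_zero hr (binomialDefect_sq_eq_zero hp hp_sq) m
  rw [← Nat.cast_pow, ← ZMod.intCast_eq_intCast_iff]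
  push_cast
  exact h

theorem stmt_10 (p : ℕ) (hp : p.Prime) (hp5 : 5 ≤ p) (m r : ℕ) (hr : r < p) :
    (((2 * p * m + 2 * r).choose (p * m + r) : ℤ))
      ≡ ((2 * m).choose m : ℤ)
        * (((2 * r).choose r : ℤ) + 2 * m * ((p + 2 * r).choose r : ℤ)
            - 2 * m * ((2 * r).choose r : ℤ)) [ZMOD ((p : ℤ) ^ 2)] :=
  stmt_10_general p hp m r hr
end

section
/- Let p ≥ 5 be a prime and r an integer with 0 ≤ r < p. Then C(p+r, r) ≡ 1 + p*H_r (mod p^2), where H_r is the r-th harmonic number (with H_0 = 0) and p*H_r is interpreted as the p-integral rational p*∑_{j=1}^r 1/j reduced modulo p^2. -/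
lemma chprod (p : ℕ) (r : ℕ) :
    (((p + r).choose r : ℚ)) = ∏ j ∈ Finset.Icc 1 r, (1 + (p:ℚ)/j) := by
  induction r with
  | zero => simp
  | succ n ih =>
    rw [Finset.prod_Icc_succ_top (by omega), ← ih]
    have key : (p + n + 1) * (p + n).choose n = (p + (n+1)).choose (n+1) * (n + 1) :=
      Nat.add_one_mul_choose_eq (p + n) n
    have hq : ((p + n + 1 : ℕ) : ℚ) * ((p + n).choose n : ℚ)
        = (((p + (n+1)).choose (n+1) : ℕ) : ℚ) * ((n + 1 : ℕ) : ℚ) := by exact_mod_cast key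
    push_cast at hq
    have hn : ((n : ℚ) + 1) ≠ 0 := by positivity
    field_simp
    push_cast
    linarith [hq]

lemma aux (p : ℕ) [Fact p.Prime] (r : ℕ) (a : ℕ → ℚ_[p])
    (h : ∀ j ∈ Finset.Icc 1 r, ‖a j‖ ≤ (p:ℝ)^(-1:ℤ)) :
    ‖∏ j ∈ Finset.Icc 1 r, (1 + a j) - 1 - ∑ j ∈ Finset.Icc 1 r, a j‖ ≤ (p:ℝ)^(-2:ℤ)
    ∧ ‖∑ j ∈ Finset.Icc 1 r, a j‖ ≤ (p:ℝ)^(-1:ℤ) := by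
  have hp1 : (1:ℝ) < p := by exact_mod_cast (Fact.out : p.Prime).one_lt
  have hp0 : (0:ℝ) < p := by linarith
  have hple : (p:ℝ)^(-1:ℤ) ≤ 1 := by
    rw [zpow_neg_one]
    exact inv_le_one_of_one_le₀ (le_of_lt hp1)
  have h2 : (p:ℝ)^(-2:ℤ) = (p:ℝ)^(-1:ℤ) * (p:ℝ)^(-1:ℤ) := by
    rw [← zpow_add₀ (ne_of_gt hp0)]; norm_num
  induction r with
  | zero => simp [zpow_pos hp0 _, le_of_lt (zpow_pos hp0 _)]
  | succ n ih =>
    obtain ⟨ih1, ih2⟩ := ih (fun j hj => h j (Finset.mem_Icc.mpr ⟨(Finset.mem_Icc.mp hj).1, le_trans (Finset.mem_Icc.mp hj).2 (by omega)⟩))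
    have ha : ‖a (n+1)‖ ≤ (p:ℝ)^(-1:ℤ) := h _ (Finset.mem_Icc.mpr ⟨by omega, le_refl _⟩)
    rw [Finset.prod_Icc_succ_top (by omega), Finset.sum_Icc_succ_top (by omega)]
    set P := ∏ j ∈ Finset.Icc 1 n, (1 + a j)
    set S := ∑ j ∈ Finset.Icc 1 n, a j
    have h1a : ‖(1 : ℚ_[p]) + a (n+1)‖ ≤ 1 := by
      refine le_trans (Padic.nonarchimedean _ _) ?_
      simp only [norm_one]
      exact max_le (le_refl 1) (le_trans ha hple)
    constructor
    · have key : P * (1 + a (n+1)) - 1 - (S + a (n+1))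
          = (P - 1 - S) * (1 + a (n+1)) + S * a (n+1) := by ring
      rw [key]
      refine le_trans (Padic.nonarchimedean _ _) (max_le ?_ ?_)
      · rw [norm_mul]
        calc ‖P - 1 - S‖ * ‖1 + a (n+1)‖ ≤ (p:ℝ)^(-2:ℤ) * 1 :=
              mul_le_mul ih1 h1a (norm_nonneg _) (le_of_lt (zpow_pos hp0 _))
          _ = (p:ℝ)^(-2:ℤ) := mul_one _
      · rw [norm_mul, h2]
        exact mul_le_mul ih2 ha (norm_nonneg _) (le_of_lt (zpow_pos hp0 _))
    · refine le_trans (Padic.nonarchimedean _ _) (max_le ih2 ha)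

theorem stmt_11 (p : ℕ) [Fact p.Prime] (hp5 : 5 ≤ p) (r : ℕ) (hr : r < p) :
    ‖(((((p + r).choose r : ℚ)
        - (1 + (p : ℚ) * ∑ j ∈ Finset.Icc 1 r, (1 / j : ℚ))) : ℚ) : ℚ_[p])‖
      ≤ (p : ℝ) ^ (-2 : ℤ) := by
  have hnorm : ∀ j ∈ Finset.Icc 1 r, ‖(((p:ℚ)/j : ℚ) : ℚ_[p])‖ ≤ (p:ℝ)^(-1:ℤ) := by
    intro j hj
    obtain ⟨hj1, hj2⟩ := Finset.mem_Icc.mp hj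
    have hjp : j < p := lt_of_le_of_lt hj2 hr
    have hjn : ‖((j:ℚ) : ℚ_[p])‖ = 1 := by
      have h1 : ‖((j:ℤ) : ℚ_[p])‖ ≤ 1 := Padic.norm_int_le_one _
      have h2 : ¬ ((p:ℤ) ∣ (j:ℤ)) := by
        rw [Int.natCast_dvd_natCast]
        exact Nat.not_dvd_of_pos_of_lt (by omega) hjp
      have h3 : ¬ ‖((j:ℤ) : ℚ_[p])‖ < 1 := by
        rw [Padic.norm_intCast_lt_one_iff]; exact h2
      have : ‖((j:ℤ) : ℚ_[p])‖ = 1 := le_antisymm h1 (not_lt.mp h3)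
      simpa using this
    rw [Padic.coe_div]
    rw [norm_div, hjn, div_one]
    have : ‖(((p:ℚ)) : ℚ_[p])‖ = (p:ℝ)⁻¹ := by
      simpa using (Padic.norm_p (p := p))
    rw [this, zpow_neg_one]
  have hprod := chprod p r
  have := (aux p r (fun j => (((p:ℚ)/j : ℚ) : ℚ_[p])) hnorm).1
  have hQ : (((p + r).choose r : ℚ)
        - (1 + (p : ℚ) * ∑ j ∈ Finset.Icc 1 r, (1 / j : ℚ)))
      = (∏ j ∈ Finset.Icc 1 r, (1 + (p:ℚ)/j)) - 1 - ∑ j ∈ Finset.Icc 1 r, (p:ℚ)/j := by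
    rw [hprod, Finset.mul_sum]
    simp only [div_eq_mul_inv, one_div]
    ring
  rw [hQ]
  push_cast
  push_cast at this
  convert this using 2
end

section
/- Let p ≥ 5 be a prime and let j be an integer with 0 ≤ j < p. Then C(p-1, j) ≡ (-1)^j * (1 - p*H_j) (mod p^2), where H_j is the j-th harmonic number. -/
/-!
For `j < p`, `C(p-1, j) = ∏_{i=1}^{j} (p - i)/i = (-1)^j ∏_{i=1}^{j} (1 - p/i)`, and each `1/i` is a
`p`-adic unit. Expanding the product, every term beyond the linear one carries a factor `p^2`,
so `∏ (1 - p a_i) ≡ 1 - p ∑ a_i (mod p^2)` for any `p`-adic integers `a_i`.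
-/

open Finset

theorem sq_dvd_prod_one_sub_mul_sub_one_sub_mul_sum {ι R : Type*} [CommRing R]
    (x : R) (s : Finset ι) (a : ι → R) :
    x ^ 2 ∣ ∏ i ∈ s, (1 - x * a i) - (1 - x * ∑ i ∈ s, a i) := by
  induction s using Finset.cons_induction with
  | empty => simp
  | cons i s hi ih =>
    rw [prod_cons, sum_cons]
    have expand : (1 - x * a i) * ∏ k ∈ s, (1 - x * a k) - (1 - x * (a i + ∑ k ∈ s, a k)) =
        (1 - x * a i) * (∏ k ∈ s, (1 - x * a k) - (1 - x * ∑ k ∈ s, a k)) +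
          x ^ 2 * (a i * ∑ k ∈ s, a k) := by ring
    rw [expand]
    exact dvd_add (dvd_mul_of_dvd_right ih _) (dvd_mul_right _ _)

theorem Padic.norm_prod_one_sub_p_mul_sub_le {ι : Type*} {p : ℕ} [Fact p.Prime]
    (s : Finset ι) {a : ι → ℚ_[p]} (ha : ∀ i ∈ s, ‖a i‖ ≤ 1) :
    ‖∏ i ∈ s, (1 - p * a i) - (1 - p * ∑ i ∈ s, a i)‖ ≤ (p : ℝ) ^ (-2 : ℤ) := by
  let b : ι → ℤ_[p] := fun i => if h : ‖a i‖ ≤ 1 then ⟨a i, h⟩ else 0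
  have hb : ∀ i ∈ s, (b i : ℚ_[p]) = a i := fun i hi => by simp [b, ha i hi]
  obtain ⟨c, hc⟩ := sq_dvd_prod_one_sub_mul_sub_one_sub_mul_sum (p : ℤ_[p]) s b
  have hc' := congrArg (PadicInt.Coe.ringHom (p := p)) hc
  have hcoe : ∀ x : ℤ_[p], PadicInt.Coe.ringHom x = x := fun _ => rfl
  simp only [map_sub, map_mul, map_prod, map_sum, map_one, map_pow, map_natCast] at hc'
  simp only [hcoe] at hc'
  rw [prod_congr rfl fun i hi => by rw [hb i hi], sum_congr rfl hb] at hc'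
  rw [hc', norm_mul, Padic.norm_p_pow]
  exact mul_le_of_le_one_right (by positivity) (PadicInt.norm_le_one c)

theorem Nat.cast_choose_pred_eq_neg_one_pow_mul_prod {K : Type*} [Field K] [CharZero K]
    {n k : ℕ} (hk : k < n) :
    ((n - 1).choose k : K) = (-1) ^ k * ∏ i ∈ Icc 1 k, (1 - n * (i : K)⁻¹) := by
  induction k with
  | zero => simp
  | succ k ih =>
    have hrec : ((n - 1).choose (k + 1) : K) * (k + 1) = (n - 1).choose k * (n - 1 - k) := by
      have := congrArg ((↑) : ℕ → K) (Nat.choose_succ_right_eq (n - 1) k)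
      push_cast [Nat.cast_sub (show k ≤ n - 1 by omega), Nat.cast_pred (show 0 < n by omega)] at this
      exact this
    rw [← eq_div_iff (Nat.cast_add_one_ne_zero k)] at hrec
    rw [hrec, ih (by omega), prod_Icc_succ_top (by omega)]
    push_cast
    field_simp
    ring

theorem stmt_12_general (p : ℕ) [Fact p.Prime] (j : ℕ) (hj : j < p) :
    ‖(((((p - 1).choose j : ℚ)
        - (-1 : ℚ) ^ j * (1 - (p : ℚ) * ∑ i ∈ Finset.Icc 1 j, (1 / i : ℚ))) : ℚ) : ℚ_[p])‖
      ≤ (p : ℝ) ^ (-2 : ℤ) := by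
  have hinv_norm : ∀ i ∈ Icc 1 j, ‖(i : ℚ_[p])⁻¹‖ ≤ 1 := fun i hi => by
    rw [mem_Icc] at hi
    rw [norm_inv, Padic.norm_natCast_eq_one_iff.mpr, inv_one]
    exact (Nat.Prime.coprime_iff_not_dvd Fact.out).mpr
      (Nat.not_dvd_of_pos_of_lt (by omega) (by omega))
  push_cast
  rw [Nat.cast_choose_pred_eq_neg_one_pow_mul_prod hj, ← mul_sub, norm_mul, norm_pow, norm_neg,
    norm_one, one_pow, one_mul]
  simpa only [one_div] using Padic.norm_prod_one_sub_p_mul_sub_le _ hinv_norm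

theorem stmt_12 (p : ℕ) [Fact p.Prime] (hp5 : 5 ≤ p) (j : ℕ) (hj : j < p) :
    ‖(((((p - 1).choose j : ℚ)
        - (-1 : ℚ) ^ j * (1 - (p : ℚ) * ∑ i ∈ Finset.Icc 1 j, (1 / i : ℚ))) : ℚ) : ℚ_[p])‖
      ≤ (p : ℝ) ^ (-2 : ℤ) :=
  stmt_12_general p j hj
end
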